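/- arXiv:1810.08813 — 11 statements merged into one kernel-verified Lean document; each statement's English description precedes it below -/
import Mathlib

section
/- Every subset S of (Fin r → ℕ) that generates H(ℓ) as an additive monoid has at least r elements. (In particular the minimal number of monomial algebra generators of the toric ring F[H(s₀)] of holomorphic Artin L-functions is at least r.) -/
def Hmono (r : ℕ) (ℓ : Fin r → ℤ) : AddSubmonoid (Fin r → ℕ) where
  carrier := {a | 0 ≤ ∑ i, (a i : ℤ) * ℓ i}
  zero_mem' := by simp
  add_mem' := by
    intro a b ha hb
    simp only [Set.mem_setOf_eq, Pi.add_apply] at *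
    have h : ∑ i, ((a i + b i : ℕ) : ℤ) * ℓ i
        = (∑ i, (a i : ℤ) * ℓ i) + ∑ i, (b i : ℤ) * ℓ i := by
      rw [← Finset.sum_add_distrib]
      apply Finset.sum_congr rfl
      intro i _
      push_cast
      ring
    rw [h]
    exact add_nonneg ha hb

private lemma sum_single_mul {r : ℕ} (ℓ : Fin r → ℤ) (i : Fin r) (k : ℕ) :
    ∑ j, ((Pi.single i k : Fin r → ℕ) j : ℤ) * ℓ j = (k : ℤ) * ℓ i := by
  rw [Finset.sum_eq_single i]
  · simp
  · intro j _ hj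
    rw [Pi.single_eq_of_ne hj]
    simp
  · simp

private lemma sum_two {r : ℕ} (ℓ : Fin r → ℤ) (x : Fin r → ℕ) (i i₀ : Fin r) (hne : i ≠ i₀)
    (h : ∀ j, j ≠ i → j ≠ i₀ → x j = 0) :
    ∑ j, (x j : ℤ) * ℓ j = (x i : ℤ) * ℓ i + (x i₀ : ℤ) * ℓ i₀ := by
  have key := Finset.sum_subset (Finset.subset_univ ({i, i₀} : Finset (Fin r)))
    (f := fun j => (x j : ℤ) * ℓ j) ?_
  · rw [← key, Finset.sum_pair hne]
  · intro j _ hj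
    simp only [Finset.mem_insert, Finset.mem_singleton, not_or] at hj
    show (x j : ℤ) * ℓ j = 0
    rw [h j hj.1 hj.2]
    simp

private lemma sum_f {r : ℕ} (ℓ : Fin r → ℤ) (i i₀ : Fin r) (k : ℕ) :
    ∑ j, (((Pi.single i 1 + Pi.single i₀ k : Fin r → ℕ)) j : ℤ) * ℓ j
      = ℓ i + (k : ℤ) * ℓ i₀ := by
  have h : ∀ j ∈ Finset.univ, (((Pi.single i 1 + Pi.single i₀ k : Fin r → ℕ)) j : ℤ) * ℓ j
      = ((Pi.single i 1 : Fin r → ℕ) j : ℤ) * ℓ j + ((Pi.single i₀ k : Fin r → ℕ) j : ℤ) * ℓ j := by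
    intro j _
    simp only [Pi.add_apply]
    push_cast
    ring
  rw [Finset.sum_congr rfl h, Finset.sum_add_distrib, sum_single_mul, sum_single_mul]
  simp

private lemma decompose_mem {M : Type*} [AddCommMonoid M] {S : Set M} {a : M}
    (ha : a ∈ AddSubmonoid.closure S) :
    a = 0 ∨ a ∈ S ∨ ∃ x y, x ∈ AddSubmonoid.closure S ∧ y ∈ AddSubmonoid.closure S ∧
      x ≠ 0 ∧ y ≠ 0 ∧ x + y = a := by
  induction ha using AddSubmonoid.closure_induction with
  | mem s hs => exact Or.inr (Or.inl hs)
  | zero => exact Or.inl rfl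
  | add x y hx hy ihx ihy =>
    by_cases hx0 : x = 0
    · subst hx0; simpa using ihy
    by_cases hy0 : y = 0
    · subst hy0; simpa using ihx
    exact Or.inr (Or.inr ⟨x, y, hx, hy, hx0, hy0, rfl⟩)

private lemma mem_of_irreducible {M : Type*} [AddCommMonoid M] {S : Set M} {a : M}
    (ha : a ∈ AddSubmonoid.closure S) (h0 : a ≠ 0)
    (hirr : ∀ x y, x ∈ AddSubmonoid.closure S → y ∈ AddSubmonoid.closure S →
      x + y = a → x = 0 ∨ y = 0) : a ∈ S := by
  rcases decompose_mem ha with h | h | ⟨x, y, hx, hy, hx0, hy0, hxy⟩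
  · exact absurd h h0
  · exact h
  · rcases hirr x y hx hy hxy with h | h
    · exact absurd h hx0
    · exact absurd h hy0

/-- Every generating set of `H(ℓ)` as an additive monoid has at least `r` elements. -/
theorem stmt0 (r : ℕ) (hr : 1 ≤ r) (ℓ : Fin r → ℤ)
    (hpos : (∃ j, ℓ j < 0) → ∃ i, 0 < ℓ i)
    (S : Set (Fin r → ℕ)) (hS : AddSubmonoid.closure S = Hmono r ℓ) :
    (r : Cardinal) ≤ Cardinal.mk S := by
  classical
  obtain ⟨i₀, hℓi₀, halt⟩ : ∃ i₀ : Fin r, 0 ≤ ℓ i₀ ∧ ∀ i, 0 ≤ ℓ i ∨ 0 < ℓ i₀ := by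
    by_cases h : ∃ j, ℓ j < 0
    · obtain ⟨i₀, hi₀⟩ := hpos h
      exact ⟨i₀, le_of_lt hi₀, fun i => Or.inr hi₀⟩
    · push_neg at h
      exact ⟨⟨0, hr⟩, h _, fun i => Or.inl (h i)⟩
  have hex : ∀ i, ∃ n : ℕ, 0 ≤ ℓ i + (n : ℤ) * ℓ i₀ := by
    intro i
    rcases halt i with h | h
    · exact ⟨0, by simpa using h⟩
    · refine ⟨(-ℓ i).toNat, ?_⟩
      have h2 : -ℓ i ≤ ((-ℓ i).toNat : ℤ) := Int.self_le_toNat _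
      nlinarith [Int.ofNat_nonneg (-ℓ i).toNat]
  set c : Fin r → ℕ := fun i => Nat.find (hex i) with hcdef
  have hc0 : ∀ i, 0 ≤ ℓ i → c i = 0 := by
    intro i hi
    rw [hcdef]
    simp only
    rw [Nat.find_eq_zero]
    simpa using hi
  set f : Fin r → (Fin r → ℕ) := fun i => Pi.single i 1 + Pi.single i₀ (c i) with hfdef
  -- basic facts about f
  have hsumf : ∀ i, ∑ j, ((f i j : ℕ) : ℤ) * ℓ j = ℓ i + (c i : ℤ) * ℓ i₀ := fun i => sum_f ℓ i i₀ (c i)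
  have hfH : ∀ i, f i ∈ Hmono r ℓ := by
    intro i
    show 0 ≤ ∑ j, ((f i j : ℕ) : ℤ) * ℓ j
    rw [hsumf i]
    exact Nat.find_spec (hex i)
  have hfii : ∀ i, f i i ≠ 0 := by
    intro i
    simp [hfdef, Pi.single_eq_same]
  have hfsupp : ∀ i j, j ≠ i → j ≠ i₀ → f i j = 0 := by
    intro i j h1 h2
    simp [hfdef, Pi.single_eq_of_ne h1, Pi.single_eq_of_ne h2]
  have hfi1 : ∀ i, f i i = 1 := by
    intro i
    by_cases h : i = i₀
    · have hci : c i = 0 := hc0 i (by rw [h]; exact hℓi₀)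
      simp [hfdef, hci]
    · simp [hfdef, Pi.single_eq_same, Pi.single_eq_of_ne h]
  -- each f i is in S
  have hfS : ∀ i, f i ∈ S := by
    intro i
    apply mem_of_irreducible (S := S)
    · rw [hS]; exact hfH i
    · intro h
      exact hfii i (by rw [h]; rfl)
    · -- irreducibility
      intro x y hx hy hxy
      rw [hS] at hx hy
      have key : ∀ u v : Fin r → ℕ, u ∈ Hmono r ℓ → u + v = f i → v i = 0 → v = 0 := by
        intro u v hu huv hvi
        have hcoord : ∀ j, u j + v j = f i j := fun j => congrFun huv j
        funext j
        show v j = 0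
        by_cases hji : j = i
        · rw [hji]; exact hvi
        by_cases hji₀ : j = i₀
        · rw [hji₀]
          -- show v i₀ = 0; suppose not
          by_contra hvj
          have hii₀ : i ≠ i₀ := fun h => hji (hji₀.trans h.symm)
          have husupp : ∀ k, k ≠ i → k ≠ i₀ → u k = 0 := by
            intro k h1 h2
            have hk := hcoord k
            rw [hfsupp i k h1 h2] at hk
            omega
          have hui : u i = 1 := by
            have hk := hcoord i
            rw [hfi1 i] at hk
            omega
          have hfii₀ : f i i₀ = c i := by
            simp [hfdef, Pi.single_eq_of_ne (Ne.symm hii₀), Pi.single_eq_same]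
          have hui₀ : u i₀ + v i₀ = c i := by
            have hk := hcoord i₀
            rwa [hfii₀] at hk
          clear hji hji₀
          have hmem : (0 : ℤ) ≤ ∑ k, (u k : ℤ) * ℓ k := hu
          rw [sum_two ℓ u i i₀ hii₀ husupp, hui] at hmem
          have hP : 0 ≤ ℓ i + (u i₀ : ℤ) * ℓ i₀ := by push_cast at hmem; linarith
          have hlt : u i₀ < c i := by omega
          exact Nat.find_min (hex i) hlt hP
        · have := hcoord j
          rw [hfsupp i j hji hji₀] at this
          omega
      have h1 : x i + y i = 1 := by
        have := congrFun hxy i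
        rw [hfi1 i] at this
        exact this
      rcases (by omega : x i = 0 ∨ y i = 0) with h | h
      · exact Or.inl (key y x hy (by rw [add_comm]; exact hxy) h)
      · exact Or.inr (key x y hx hxy h)
  -- injectivity
  have hinj : Function.Injective (fun i => (⟨f i, hfS i⟩ : S)) := by
    intro i i' h
    have h' : f i = f i' := congrArg Subtype.val h
    have h1 : f i' i ≠ 0 := by rw [← h']; exact hfii i
    have h2 : f i i' ≠ 0 := by rw [h']; exact hfii i'
    by_contra hne
    have e1 : i = i₀ := by
      by_contra hii₀
      exact h1 (hfsupp i' i (fun hc => hne (hc ▸ rfl)) hii₀)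
    have e2 : i' = i₀ := by
      by_contra hii₀
      exact h2 (hfsupp i i' (fun hc => hne (hc.symm ▸ rfl)) hii₀)
    exact hne (e1.trans e2.symm)
  have := Cardinal.mk_le_of_injective hinj
  simpa using this
end

section
/- Suppose i ≠ j are indices with ℓ_i > 0 and ℓ_j < 0, and set m = ⌈(-ℓ_j)/ℓ_i⌉ (ceiling division). Then the vector g = m·e_i + e_j belongs to H(ℓ), the vector (m−1)·e_i + e_j does not belong to H(ℓ), and g is an atom of H(ℓ): g cannot be written as a + b with a, b ∈ H(ℓ) both nonzero. -/
lemma memH_iff (r : ℕ) (ℓ : Fin r → ℤ) {a : Fin r → ℕ} :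
    a ∈ Hmono r ℓ ↔ 0 ≤ ∑ i, (a i : ℤ) * ℓ i := Iff.rfl

lemma sum_single (r : ℕ) (ℓ : Fin r → ℤ) (i : Fin r) (c : ℕ) :
    ∑ k, ((Pi.single i c : Fin r → ℕ) k : ℤ) * ℓ k = c * ℓ i := by
  rw [Finset.sum_eq_single i]
  · simp
  · intro k _ hk
    simp [Pi.single_eq_of_ne hk]
  · simp

lemma sum_g (r : ℕ) (ℓ : Fin r → ℤ) (i j : Fin r) (c : ℕ) :
    ∑ k, (((c • Pi.single i 1 + Pi.single j 1 : Fin r → ℕ)) k : ℤ) * ℓ k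
      = c * ℓ i + ℓ j := by
  have h : ∀ k, (((c • Pi.single i 1 + Pi.single j 1 : Fin r → ℕ)) k : ℤ) * ℓ k
      = ((Pi.single i c : Fin r → ℕ) k : ℤ) * ℓ k + ((Pi.single j 1 : Fin r → ℕ) k : ℤ) * ℓ k := by
    intro k
    have : (c • Pi.single i 1 : Fin r → ℕ) k = (Pi.single i c : Fin r → ℕ) k := by
      simp [Pi.single_apply]
    simp only [Pi.add_apply, this]
    push_cast
    ring
  simp only [h, Finset.sum_add_distrib, sum_single]
  simp

/-- If `ℓ i > 0 > ℓ j` and `m = ⌈-ℓ j / ℓ i⌉`, then `g = m•eᵢ + eⱼ ∈ H(ℓ)`,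
`(m-1)•eᵢ + eⱼ ∉ H(ℓ)`, and `g` is an atom of `H(ℓ)`. -/
theorem stmt1 (r : ℕ) (ℓ : Fin r → ℤ) (i j : Fin r) (hij : i ≠ j)
    (hi : 0 < ℓ i) (hj : ℓ j < 0)
    (m : ℕ) (hm : (m : ℤ) = ⌈(-(ℓ j) : ℚ) / (ℓ i : ℚ)⌉) :
    m • Pi.single i 1 + Pi.single j 1 ∈ Hmono r ℓ ∧
    (m - 1) • Pi.single i 1 + Pi.single j 1 ∉ Hmono r ℓ ∧
    (∀ a b : Fin r → ℕ, a ∈ Hmono r ℓ → b ∈ Hmono r ℓ →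
      a + b = m • Pi.single i 1 + Pi.single j 1 → a = 0 ∨ b = 0) := by
  have hiQ : (0:ℚ) < (ℓ i : ℚ) := by exact_mod_cast hi
  have hjQ : (0:ℚ) < (-(ℓ j) : ℚ) := by
    have : (0:ℤ) < -(ℓ j) := by omega
    exact_mod_cast this
  -- m ≥ 1
  have hm1 : 1 ≤ m := by
    have : (0:ℤ) < m := by
      rw [hm]
      exact_mod_cast Int.ceil_pos.mpr (div_pos hjQ hiQ)
    omega
  -- key inequality 1 : 0 ≤ m * ℓ i + ℓ j
  have key1 : 0 ≤ (m:ℤ) * ℓ i + ℓ j := by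
    have h1 : (-(ℓ j) : ℚ) / (ℓ i : ℚ) ≤ (m:ℚ) := by
      rw [show ((m:ℚ)) = ((m:ℤ):ℚ) by push_cast; ring, hm]
      exact Int.le_ceil _
    have h2 : (-(ℓ j) : ℚ) ≤ (m:ℚ) * (ℓ i : ℚ) := (div_le_iff₀ hiQ).mp h1
    have : (-(ℓ j) : ℤ) ≤ (m:ℤ) * ℓ i := by exact_mod_cast h2
    omega
  -- key inequality 2 : (m-1) * ℓ i + ℓ j < 0
  have key2 : ∀ c : ℕ, c < m → (c:ℤ) * ℓ i + ℓ j < 0 := by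
    intro c hc
    have h1 : ((m:ℚ) - 1) < (-(ℓ j) : ℚ) / (ℓ i : ℚ) := by
      have := Int.ceil_lt_add_one ((-(ℓ j) : ℚ) / (ℓ i : ℚ))
      rw [← hm] at this
      push_cast at this ⊢
      linarith
    have h2 : ((m:ℚ) - 1) * (ℓ i : ℚ) < (-(ℓ j) : ℚ) := (lt_div_iff₀ hiQ).mp h1
    have h3 : ((m:ℤ) - 1) * ℓ i < -(ℓ j) := by exact_mod_cast h2
    have hcm : (c:ℤ) ≤ (m:ℤ) - 1 := by exact_mod_cast Nat.le_sub_one_of_lt hc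
    nlinarith
  refine ⟨?_, ?_, ?_⟩
  · rw [memH_iff, sum_g]
    exact key1
  · rw [memH_iff, sum_g]
    push_neg
    have := key2 (m - 1) (by omega)
    exact_mod_cast this
  · intro a b ha hb hab
    rw [memH_iff] at ha hb
    -- componentwise facts
    have habk : ∀ k, a k + b k = (m • Pi.single i 1 + Pi.single j 1 : Fin r → ℕ) k :=
      fun k => congrFun hab k
    have hgj : (m • Pi.single i 1 + Pi.single j 1 : Fin r → ℕ) j = 1 := by
      simp [Pi.single_eq_of_ne (Ne.symm hij), hij]
    have hgi : (m • Pi.single i 1 + Pi.single j 1 : Fin r → ℕ) i = m := by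
      simp [Pi.single_eq_of_ne hij]
    have hgk : ∀ k, k ≠ i → k ≠ j → (m • Pi.single i 1 + Pi.single j 1 : Fin r → ℕ) k = 0 := by
      intro k hki hkj
      simp [Pi.single_eq_of_ne hki, Pi.single_eq_of_ne hkj]
    have hzero : ∀ k, k ≠ i → k ≠ j → a k = 0 ∧ b k = 0 := by
      intro k hki hkj
      have := habk k
      rw [hgk k hki hkj] at this
      omega
    have hji : a j + b j = 1 := by rw [habk j, hgj]
    have hii : a i + b i = m := by rw [habk i, hgi]
    -- sum formulas for a, b : sum = (x i) * ℓ i + (x j) * ℓ j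
    have hsum : ∀ x : Fin r → ℕ, (∀ k, k ≠ i → k ≠ j → x k = 0) →
        ∑ k, (x k : ℤ) * ℓ k = (x i : ℤ) * ℓ i + (x j : ℤ) * ℓ j := by
      intro x hx
      rw [← Finset.sum_subset (Finset.subset_univ {i, j})]
      · rw [Finset.sum_pair hij]
      · intro k _ hk
        simp only [Finset.mem_insert, Finset.mem_singleton] at hk
        push_neg at hk
        rw [hx k hk.1 hk.2]
        simp
    have hsa := hsum a (fun k h1 h2 => (hzero k h1 h2).1)
    have hsb := hsum b (fun k h1 h2 => (hzero k h1 h2).2)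
    rw [hsa] at ha
    rw [hsb] at hb
    -- case on a j
    rcases Nat.le_one_iff_eq_zero_or_eq_one.mp (by omega : a j ≤ 1) with haj | haj
    · -- a j = 0, b j = 1 ⇒ a = 0
      left
      have hbj : b j = 1 := by omega
      -- b i * ℓ i + ℓ j ≥ 0 and b i ≤ m ⇒ b i = m ⇒ a i = 0
      rw [hbj] at hb
      have hbi : ¬ (b i < m) := by
        intro h
        have := key2 (b i) h
        push_cast at hb
        omega
      have hai : a i = 0 := by omega
      funext k
      by_cases hki : k = i
      · simpa [hki] using hai
      · by_cases hkj : k = j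
        · simpa [hkj] using haj
        · simpa using (hzero k hki hkj).1
    · -- a j = 1, b j = 0 ⇒ b = 0
      right
      have hbj : b j = 0 := by omega
      rw [haj] at ha
      have hai : ¬ (a i < m) := by
        intro h
        have := key2 (a i) h
        push_cast at ha
        omega
      have hbi : b i = 0 := by omega
      funext k
      by_cases hki : k = i
      · simpa [hki] using hbi
      · by_cases hkj : k = j
        · simpa [hkj] using hbj
        · simpa using (hzero k hki hkj).2
end

section
/- Suppose there is an index i₀ with ℓ_{i₀} > 0, with ℓ_j ≤ 0 for all j ≠ i₀, and with ℓ_{i₀} dividing ℓ_j for every j. For j ≠ i₀ set m_j = (−ℓ_j)/ℓ_{i₀} ∈ ℕ. Then H(ℓ) equals the additive submonoid of (Fin r → ℕ) generated by the r elements e_{i₀} together with m_j·e_{i₀} + e_j for all j ≠ i₀. -/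
/-- If `ℓ i₀ > 0`, `ℓ j ≤ 0` for `j ≠ i₀`, and `ℓ i₀ ∣ ℓ j` for all `j`, with
`m j = -ℓ j / ℓ i₀`, then `H(ℓ)` is generated by `e i₀` and `m j • e i₀ + e j` for `j ≠ i₀`. -/
theorem stmt3 (r : ℕ) (ℓ : Fin r → ℤ) (i₀ : Fin r)
    (hi₀ : 0 < ℓ i₀) (hneg : ∀ j, j ≠ i₀ → ℓ j ≤ 0) (hdvd : ∀ j, ℓ i₀ ∣ ℓ j)
    (m : Fin r → ℕ) (hm : ∀ j, j ≠ i₀ → (m j : ℤ) * ℓ i₀ = -ℓ j) :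
    Hmono r ℓ = AddSubmonoid.closure
      ({Pi.single i₀ 1} ∪ {v | ∃ j, j ≠ i₀ ∧ v = m j • Pi.single i₀ 1 + Pi.single j 1}) := by
  apply le_antisymm
  · intro a ha
    have ha' : (0:ℤ) ≤ ∑ i, (a i : ℤ) * ℓ i := ha
    set S := Finset.univ.erase i₀ with hS
    have hsplit : ∑ i, (a i : ℤ) * ℓ i
        = ((a i₀ : ℤ) - ∑ j ∈ S, (a j : ℤ) * (m j : ℤ)) * ℓ i₀ := by
      rw [← Finset.add_sum_erase _ _ (Finset.mem_univ i₀), ← hS]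
      have : ∑ j ∈ S, (a j : ℤ) * ℓ j = ∑ j ∈ S, -((a j : ℤ) * (m j : ℤ) * ℓ i₀) := by
        apply Finset.sum_congr rfl
        intro j hj
        have hj' : j ≠ i₀ := Finset.ne_of_mem_erase hj
        rw [← neg_neg (ℓ j), ← hm j hj']
        ring
      rw [this]
      rw [Finset.sum_neg_distrib, ← Finset.sum_mul]
      ring
    have hsum : (∑ j ∈ S, a j * m j) ≤ a i₀ := by
      rw [hsplit] at ha'
      have h2 : (0:ℤ) ≤ (a i₀ : ℤ) - ∑ j ∈ S, (a j : ℤ) * (m j : ℤ) :=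
        (mul_nonneg_iff_of_pos_right hi₀).mp ha'
      have h3 : (∑ j ∈ S, (a j : ℤ) * (m j : ℤ)) ≤ (a i₀ : ℤ) := by linarith
      exact_mod_cast h3
    have key : a = (a i₀ - ∑ j ∈ S, a j * m j) • Pi.single i₀ 1
        + ∑ j ∈ S, a j • (m j • (Pi.single i₀ 1 : Fin r → ℕ) + Pi.single j 1) := by
      funext k
      simp only [Pi.add_apply, Pi.smul_apply, Finset.sum_apply, smul_eq_mul]
      by_cases hk : k = i₀
      · subst hk
        have : ∑ j ∈ S, a j * (m j * (Pi.single k 1 : Fin r → ℕ) k + (Pi.single j 1 : Fin r → ℕ) k)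
            = ∑ j ∈ S, a j * m j := by
          apply Finset.sum_congr rfl
          intro j hj
          have hj' : j ≠ k := Finset.ne_of_mem_erase hj
          simp [Pi.single_eq_same, Pi.single_eq_of_ne' hj']
        rw [this, Pi.single_eq_same, mul_one, Nat.sub_add_cancel hsum]
      · have : ∑ j ∈ S, a j * (m j * (Pi.single i₀ 1 : Fin r → ℕ) k + (Pi.single j 1 : Fin r → ℕ) k)
            = a k := by
          rw [Finset.sum_eq_single k]
          · simp [Pi.single_eq_of_ne hk]
          · intro j hj hjk
            simp [Pi.single_eq_of_ne hk, Pi.single_eq_of_ne' hjk]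
          · intro h
            exact absurd (Finset.mem_erase.mpr ⟨hk, Finset.mem_univ k⟩) h
        rw [this, Pi.single_eq_of_ne hk]
        simp
    rw [key]
    refine add_mem (nsmul_mem (AddSubmonoid.subset_closure (Set.mem_union_left _ (Set.mem_singleton _))) _)
      (AddSubmonoid.sum_mem _ ?_)
    intro j hj
    refine nsmul_mem (AddSubmonoid.subset_closure (Set.mem_union_right _ ?_)) _
    exact Set.mem_setOf_eq ▸ ⟨j, Finset.ne_of_mem_erase hj, rfl⟩
  · rw [AddSubmonoid.closure_le]
    rintro v (rfl | ⟨j, hj, rfl⟩)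
    · show (0:ℤ) ≤ ∑ i, ((Pi.single i₀ 1 : Fin r → ℕ) i : ℤ) * ℓ i
      rw [Finset.sum_eq_single i₀]
      · simp [Pi.single_eq_same]
        exact hi₀.le
      · intro b _ hb
        simp [Pi.single_eq_of_ne hb]
      · simp
    · show (0:ℤ) ≤ ∑ i, (((m j • (Pi.single i₀ 1 : Fin r → ℕ) + (Pi.single j 1 : Fin r → ℕ)) i : ℕ) : ℤ) * ℓ i
      have heq : ∑ i, (((m j • (Pi.single i₀ 1 : Fin r → ℕ) + (Pi.single j 1 : Fin r → ℕ)) i : ℕ) : ℤ) * ℓ i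
          = (m j : ℤ) * ℓ i₀ + ℓ j := by
        have hsp : ∀ i, (((m j • (Pi.single i₀ 1 : Fin r → ℕ) + (Pi.single j 1 : Fin r → ℕ)) i : ℕ) : ℤ) * ℓ i
            = ((m j * (Pi.single i₀ 1 : Fin r → ℕ) i : ℕ) : ℤ) * ℓ i + (((Pi.single j 1 : Fin r → ℕ) i : ℕ) : ℤ) * ℓ i := by
          intro i
          simp only [Pi.add_apply, Pi.smul_apply, smul_eq_mul]
          push_cast
          ring
        rw [Finset.sum_congr rfl (fun i _ => hsp i), Finset.sum_add_distrib]
        congr 1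
        · rw [Finset.sum_eq_single i₀]
          · simp
          · intro b _ hb; simp [Pi.single_eq_of_ne hb]
          · simp
        · rw [Finset.sum_eq_single j]
          · simp
          · intro b _ hb; simp [Pi.single_eq_of_ne hb]
          · simp
      rw [heq, hm j hj]
      simp
end

section
/- Suppose there is an index i₀ with ℓ_{i₀} > 0, with ℓ_j ≤ 0 for all j ≠ i₀, and with ℓ_{i₀} dividing ℓ_j for every j. For j ≠ i₀ set m_j = (−ℓ_j)/ℓ_{i₀} ∈ ℕ. Then the additive monoid homomorphism Φ : (Fin r → ℕ) → (Fin r → ℕ) defined by Φ(b) = b_{i₀}·e_{i₀} + Σ_{j ≠ i₀} b_j·(m_j·e_{i₀} + e_j) is injective and its range is exactly H(ℓ); in particular H(ℓ) is a free commutative monoid of rank r. -/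
/-- Under the divisibility hypotheses, the map
`Φ b = b i₀ • e i₀ + ∑_{j ≠ i₀} b j • (m j • e i₀ + e j)` is injective with range `H(ℓ)`;
hence `H(ℓ)` is free commutative of rank `r`. -/
theorem stmt4 (r : ℕ) (ℓ : Fin r → ℤ) (i₀ : Fin r)
    (hi₀ : 0 < ℓ i₀) (hneg : ∀ j, j ≠ i₀ → ℓ j ≤ 0) (hdvd : ∀ j, ℓ i₀ ∣ ℓ j)
    (m : Fin r → ℕ) (hm : ∀ j, j ≠ i₀ → (m j : ℤ) * ℓ i₀ = -ℓ j)
    (Φ : (Fin r → ℕ) → (Fin r → ℕ))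
    (hΦ : ∀ b, Φ b = b i₀ • Pi.single i₀ 1 +
        ∑ j ∈ Finset.univ.erase i₀, b j • (m j • Pi.single i₀ 1 + Pi.single j 1)) :
    Function.Injective Φ ∧ Set.range Φ = (Hmono r ℓ : Set (Fin r → ℕ)) := by
  have hval : ∀ b k, Φ b k =
      if k = i₀ then b i₀ + ∑ j ∈ Finset.univ.erase i₀, b j * m j else b k := by
    intro b k
    rw [hΦ]
    simp only [Pi.add_apply, Pi.smul_apply, Finset.sum_apply, Pi.single_apply, smul_eq_mul]
    by_cases hk : k = i₀
    · subst hk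
      simp only [eq_self_iff_true, if_true, mul_one]
      congr 1
      apply Finset.sum_congr rfl
      intro j hj
      rw [Finset.mem_erase] at hj
      rw [if_neg (Ne.symm hj.1), add_zero]
    · simp only [if_neg hk, mul_zero, zero_add]
      rw [Finset.sum_eq_single k]
      · simp
      · intro j hj hjk
        simp [Ne.symm hjk]
      · intro h
        simp [Finset.mem_erase, hk] at h
  constructor
  · intro a b hab
    have hoff : ∀ j, j ≠ i₀ → a j = b j := by
      intro j hj
      have := congrFun hab j
      rwa [hval, hval, if_neg hj, if_neg hj] at this
    have hsum : ∑ j ∈ Finset.univ.erase i₀, a j * m j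
        = ∑ j ∈ Finset.univ.erase i₀, b j * m j := by
      apply Finset.sum_congr rfl
      intro j hj
      rw [Finset.mem_erase] at hj
      rw [hoff j hj.1]
    have hi : a i₀ = b i₀ := by
      have := congrFun hab i₀
      rw [hval, hval, if_pos rfl, if_pos rfl, hsum] at this
      omega
    funext k
    by_cases hk : k = i₀
    · rw [hk]; exact hi
    · exact hoff k hk
  · ext a
    constructor
    · rintro ⟨b, rfl⟩
      show (0 : ℤ) ≤ ∑ i, (Φ b i : ℤ) * ℓ i
      rw [← Finset.add_sum_erase _ _ (Finset.mem_univ i₀)]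
      have h1 : (Φ b i₀ : ℤ) = b i₀ + ∑ j ∈ Finset.univ.erase i₀, (b j : ℤ) * m j := by
        rw [hval, if_pos rfl]; push_cast; ring
      have h2 : ∑ j ∈ Finset.univ.erase i₀, (Φ b j : ℤ) * ℓ j
          = ∑ j ∈ Finset.univ.erase i₀, (b j : ℤ) * ℓ j := by
        apply Finset.sum_congr rfl
        intro j hj
        rw [Finset.mem_erase] at hj
        rw [hval, if_neg hj.1]
      rw [h1, h2, add_mul, Finset.sum_mul]
      have h3 : ∑ j ∈ Finset.univ.erase i₀, (b j : ℤ) * m j * ℓ i₀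
          = ∑ j ∈ Finset.univ.erase i₀, -((b j : ℤ) * ℓ j) := by
        apply Finset.sum_congr rfl
        intro j hj
        rw [Finset.mem_erase] at hj
        rw [mul_assoc, hm j hj.1]; ring
      rw [h3, Finset.sum_neg_distrib]
      have : (0:ℤ) ≤ (b i₀ : ℤ) * ℓ i₀ :=
        mul_nonneg (Int.natCast_nonneg _) hi₀.le
      linarith
    · intro ha
      have ha' : (0 : ℤ) ≤ ∑ i, (a i : ℤ) * ℓ i := ha
      set S : ℕ := ∑ j ∈ Finset.univ.erase i₀, a j * m j with hS
      have hSle : S ≤ a i₀ := by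
        have key : (S : ℤ) * ℓ i₀ ≤ (a i₀ : ℤ) * ℓ i₀ := by
          have hsplit : ∑ i, (a i : ℤ) * ℓ i
              = (a i₀ : ℤ) * ℓ i₀ + ∑ j ∈ Finset.univ.erase i₀, (a j : ℤ) * ℓ j := by
            rw [← Finset.add_sum_erase _ _ (Finset.mem_univ i₀)]
          have hSval : (S : ℤ) * ℓ i₀ = ∑ j ∈ Finset.univ.erase i₀, -((a j : ℤ) * ℓ j) := by
            rw [hS]
            push_cast
            rw [Finset.sum_mul]
            apply Finset.sum_congr rfl
            intro j hj
            rw [Finset.mem_erase] at hj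
            rw [mul_assoc, hm j hj.1]; ring
          rw [hSval, Finset.sum_neg_distrib]
          linarith [hsplit ▸ ha']
        have := le_of_mul_le_mul_right key hi₀
        exact_mod_cast this
      refine ⟨Function.update a i₀ (a i₀ - S), ?_⟩
      funext k
      rw [hval]
      by_cases hk : k = i₀
      · rw [if_pos hk, hk, Function.update_self]
        have : ∑ j ∈ Finset.univ.erase i₀, Function.update a i₀ (a i₀ - S) j * m j = S := by
          rw [hS]
          apply Finset.sum_congr rfl
          intro j hj
          rw [Finset.mem_erase] at hj
          rw [Function.update_of_ne hj.1]
        rw [this]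
        omega
      · rw [if_neg hk, Function.update_of_ne hk]
end

section
/- Suppose ℓ_k < 0 for some k and ℓ_i > 0 for some i. If H(ℓ) can be generated as an additive monoid by a set of r elements, then there is exactly one index i₀ with ℓ_{i₀} > 0, and ℓ_{i₀} divides ℓ_j for every j. (Equivalently: if Artin's conjecture fails at s₀ and the toric ideal I_{H(s₀)} is zero, then s₀ is a zero of exactly one of the functions f_1,…,f_r and its order ℓ_{i₀} divides all the orders ℓ_j.) -/
section Aux

/-- An atom of an additive submonoid `H` of `Fin r → ℕ`. -/
def IsAt {M : Type*} [AddCommMonoid M] (H : AddSubmonoid M) (a : M) : Prop :=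
  a ≠ 0 ∧ ∀ b ∈ H, ∀ c ∈ H, b + c = a → b = 0 ∨ c = 0

lemma exists_rep {M : Type*} [AddCommMonoid M] {S : Finset M} {a : M}
    (h : a ∈ AddSubmonoid.closure (S : Set M)) :
    ∃ f : M → ℕ, ∑ x ∈ S, f x • x = a := by
  classical
  induction h using AddSubmonoid.closure_induction with
  | mem x hx =>
    have hx' : x ∈ S := hx
    exact ⟨fun y => if y = x then 1 else 0, by
      simp [ite_smul, Finset.sum_ite_eq' S x, hx']⟩
  | zero => exact ⟨0, by simp⟩
  | add x y _ _ hx hy =>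
    obtain ⟨f, hf⟩ := hx; obtain ⟨g, hg⟩ := hy
    exact ⟨f + g, by simp [add_smul, Finset.sum_add_distrib, hf, hg]⟩

lemma atom_of_nsmul {M : Type*} [AddCommMonoid M] {H : AddSubmonoid M} {a y : M}
    (hy : y ∈ H) (hat : IsAt H a) {n : ℕ} (h : n • y = a) : a = y := by
  obtain ⟨hne, hsp⟩ := hat
  rcases n with _ | n
  · exact absurd h.symm (by simpa using hne)
  · have : y + n • y = a := by rw [← h, succ_nsmul']
    rcases hsp y hy (n • y) (AddSubmonoid.nsmul_mem H hy n) this with h0 | h0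
    · rw [h0] at this ⊢; simp at this; exact absurd this.symm hne
    · rw [h0, add_zero] at this; exact this.symm

lemma atom_mem_of_sum {M : Type*} [AddCommMonoid M] {H : AddSubmonoid M}
    (T : Finset M) (hT : ∀ x ∈ T, x ∈ H) (f : M → ℕ) {a : M} (hat : IsAt H a)
    (hsum : ∑ x ∈ T, f x • x = a) : a ∈ T := by
  classical
  induction T using Finset.induction_on with
  | empty => simp at hsum; exact absurd hsum.symm hat.1
  | insert _ _ hx ih =>
    rename_i y T'
    rw [Finset.sum_insert hx] at hsum
    have hy : y ∈ H := hT y (Finset.mem_insert_self y T')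
    have h1 : f y • y ∈ H := AddSubmonoid.nsmul_mem H hy _
    have h2 : ∑ x ∈ T', f x • x ∈ H :=
      AddSubmonoid.sum_mem H
        (fun x hxT => AddSubmonoid.nsmul_mem H (hT x (Finset.mem_insert_of_mem hxT)) _)
    rcases hat.2 _ h1 _ h2 hsum with h0 | h0
    · rw [h0, zero_add] at hsum
      exact Finset.mem_insert_of_mem (ih (fun x hxT => hT x (Finset.mem_insert_of_mem hxT)) hsum)
    · rw [h0, add_zero] at hsum
      rw [atom_of_nsmul hy hat hsum]
      exact Finset.mem_insert_self y T'

variable {r : ℕ} {ℓ : Fin r → ℤ}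

lemma Hmem {a : Fin r → ℕ} : a ∈ Hmono r ℓ ↔ 0 ≤ ∑ i, (a i : ℤ) * ℓ i := Iff.rfl

lemma sum_single_supp {b : Fin r → ℕ} {j : Fin r} (hb : ∀ t, t ≠ j → b t = 0) :
    ∑ t, (b t : ℤ) * ℓ t = (b j : ℤ) * ℓ j := by
  rw [Finset.sum_eq_single j]
  · intro t _ ht; rw [hb t ht]; simp
  · simp

lemma sum_pair_supp {b : Fin r → ℕ} {k i : Fin r} (hki : k ≠ i)
    (hb : ∀ t, t ≠ k → t ≠ i → b t = 0) :
    ∑ t, (b t : ℤ) * ℓ t = (b k : ℤ) * ℓ k + (b i : ℤ) * ℓ i := by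
  rw [← Finset.sum_pair hki (f := fun t => (b t : ℤ) * ℓ t)]
  apply (Finset.sum_subset (Finset.subset_univ _) _).symm
  intro t _ ht
  simp only [Finset.mem_insert, Finset.mem_singleton, not_or] at ht
  rw [hb t ht.1 ht.2]; simp

lemma single_memH {j : Fin r} (hj : 0 ≤ ℓ j) : (Pi.single j 1 : Fin r → ℕ) ∈ Hmono r ℓ := by
  rw [Hmem, sum_single_supp (fun t ht => Pi.single_eq_of_ne ht 1)]
  simp [hj]

lemma A_memH {k i : Fin r} (hki : k ≠ i) {m : ℕ}
    (hm : 0 ≤ (m : ℤ) * ℓ i + ℓ k) :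
    (Pi.single k 1 + Pi.single i m : Fin r → ℕ) ∈ Hmono r ℓ := by
  rw [Hmem, sum_pair_supp hki (fun t htk hti => by
    simp [Pi.single_eq_of_ne htk, Pi.single_eq_of_ne hti])]
  simp only [Pi.add_apply, Pi.single_eq_same, Pi.single_eq_of_ne hki,
    Pi.single_eq_of_ne (Ne.symm hki)]
  push_cast
  linarith

lemma single_isAt (H : AddSubmonoid (Fin r → ℕ)) (j : Fin r) :
    IsAt H (Pi.single j 1) := by
  refine ⟨fun h => by simpa using congrFun h j, fun b _ c _ hbc => ?_⟩
  have hj := congrFun hbc j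
  simp only [Pi.add_apply, Pi.single_eq_same] at hj
  have hother : ∀ t, t ≠ j → b t = 0 ∧ c t = 0 := by
    intro t ht
    have := congrFun hbc t
    simp only [Pi.add_apply, Pi.single_eq_of_ne ht] at this
    omega
  rcases Nat.add_eq_one_iff.mp hj with ⟨hb, _⟩ | ⟨_, hc⟩
  · left; funext t
    by_cases ht : t = j
    · rw [ht]; exact hb
    · exact (hother t ht).1
  · right; funext t
    by_cases ht : t = j
    · rw [ht]; exact hc
    · exact (hother t ht).2

lemma A_isAt {k i : Fin r} (hk : ℓ k < 0) (hi : 0 < ℓ i) {m : ℕ}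
    (hmin : ∀ n : ℕ, 0 ≤ (n : ℤ) * ℓ i + ℓ k → m ≤ n) :
    IsAt (Hmono r ℓ) (Pi.single k 1 + Pi.single i m) := by
  have hki : k ≠ i := fun h => by rw [h] at hk; omega
  constructor
  · intro h
    have := congrFun h k
    simp [Pi.single_eq_same, Pi.single_eq_of_ne hki] at this
  · intro b hb c hc hbc
    have happ : ∀ t, b t + c t = (Pi.single k 1 + Pi.single i m : Fin r → ℕ) t :=
      fun t => congrFun hbc t
    have hk' : b k + c k = 1 := by
      have := happ k
      simpa [Pi.single_eq_same, Pi.single_eq_of_ne hki] using this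
    have key : ∀ d e : Fin r → ℕ, d ∈ Hmono r ℓ → (∀ t, d t + e t =
        (Pi.single k 1 + Pi.single i m : Fin r → ℕ) t) → d k = 1 → e = 0 := by
      intro d e hd happ' hdk
      have hoth' : ∀ t, t ≠ k → t ≠ i → d t = 0 ∧ e t = 0 := by
        intro t htk hti
        have := happ' t
        simp only [Pi.add_apply, Pi.single_eq_of_ne htk, Pi.single_eq_of_ne hti] at this
        omega
      have hsum := Hmem.mp hd
      rw [sum_pair_supp hki (fun t htk hti => (hoth' t htk hti).1)] at hsum
      rw [hdk] at hsum
      have : 0 ≤ (d i : ℤ) * ℓ i + ℓ k := by push_cast at hsum ⊢; linarith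
      have hge : m ≤ d i := hmin (d i) this
      have hdi : d i + e i = m := by
        have := happ' i
        simpa [Pi.single_eq_same, Pi.single_eq_of_ne (Ne.symm hki)] using this
      have hei : e i = 0 := by omega
      have hek : e k = 0 := by
        have := happ' k
        simp only [Pi.add_apply, Pi.single_eq_same, Pi.single_eq_of_ne hki] at this
        omega
      funext t
      by_cases htk : t = k
      · rw [htk]; exact hek
      · by_cases hti : t = i
        · rw [hti]; exact hei
        · exact (hoth' t htk hti).2
    rcases Nat.add_eq_one_iff.mp hk' with ⟨hbk, hck⟩ | ⟨hbk, hck⟩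
    · left
      exact key c b hc (fun t => by rw [← happ t]; ring) hck
    · right
      exact key b c hb happ hbk

end Aux

/-- If some `ℓ k < 0`, some `ℓ i > 0`, and `H(ℓ)` is generated by `r` elements, then there is
exactly one index `i₀` with `ℓ i₀ > 0`, and `ℓ i₀` divides every `ℓ j`. -/
theorem stmt5 (r : ℕ) (ℓ : Fin r → ℤ)
    (hk : ∃ k, ℓ k < 0) (hi : ∃ i, 0 < ℓ i)
    (hgen : ∃ S : Finset (Fin r → ℕ), S.card = r ∧
        AddSubmonoid.closure (S : Set (Fin r → ℕ)) = Hmono r ℓ) :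
    ∃ i₀, 0 < ℓ i₀ ∧ (∀ i, 0 < ℓ i → i = i₀) ∧ ∀ j, ℓ i₀ ∣ ℓ j := by
  classical
  obtain ⟨k0, hk0⟩ := hk
  obtain ⟨i, hi⟩ := hi
  obtain ⟨S, hcard, hclos⟩ := hgen
  -- every atom of `Hmono r ℓ` lies in `S`
  have atom_mem : ∀ a, a ∈ Hmono r ℓ → IsAt (Hmono r ℓ) a → a ∈ S := by
    intro a ha hat
    have ha' : a ∈ AddSubmonoid.closure (S : Set (Fin r → ℕ)) := by rw [hclos]; exact ha
    obtain ⟨f, hf⟩ := exists_rep ha'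
    exact atom_mem_of_sum S
      (fun x hx => by rw [← hclos]; exact AddSubmonoid.subset_closure hx) f hat hf
  -- minimal multipliers relative to a positive index
  have hexgen : ∀ i' : Fin r, 0 < ℓ i' → ∀ t, ∃ n : ℕ, 0 ≤ (n : ℤ) * ℓ i' + ℓ t := by
    intro i' hi' t
    refine ⟨(ℓ t).natAbs, ?_⟩
    have h1 : -(ℓ t) ≤ ((ℓ t).natAbs : ℤ) := by omega
    have h2 : ((ℓ t).natAbs : ℤ) * 1 ≤ ((ℓ t).natAbs : ℤ) * ℓ i' :=
      mul_le_mul_of_nonneg_left (by omega) (by positivity)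
    linarith
  have hex := hexgen i hi
  set m : Fin r → ℕ := fun t => Nat.find (hex t) with hmdef
  have hmspec : ∀ t, 0 ≤ (m t : ℤ) * ℓ i + ℓ t := fun t => Nat.find_spec (hex t)
  have hmmin : ∀ t, ∀ n : ℕ, 0 ≤ (n : ℤ) * ℓ i + ℓ t → m t ≤ n :=
    fun t n h => Nat.find_min' (hex t) h
  -- the candidate generating family
  set g : Fin r → (Fin r → ℕ) :=
    fun t => if 0 ≤ ℓ t then Pi.single t 1 else Pi.single t 1 + Pi.single i (m t) with hgdef
  have hgS : ∀ t, g t ∈ S := by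
    intro t
    by_cases h : 0 ≤ ℓ t
    · rw [hgdef]; simp only [if_pos h]
      exact atom_mem _ (single_memH h) (single_isAt _ t)
    · push_neg at h
      rw [hgdef]; simp only [if_neg (not_le.mpr h)]
      have hti : t ≠ i := fun he => by rw [he] at h; omega
      exact atom_mem _ (A_memH hti (hmspec t)) (A_isAt h hi (hmmin t))
  have hgdiag : ∀ s, g s s = 1 := by
    intro s
    by_cases h : 0 ≤ ℓ s
    · rw [hgdef]; simp only [if_pos h]; exact Pi.single_eq_same s 1
    · push_neg at h
      have hsi : s ≠ i := fun he => by rw [he] at h; omega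
      rw [hgdef]; simp only [if_neg (not_le.mpr h), Pi.add_apply, Pi.single_eq_same,
        Pi.single_eq_of_ne hsi]
      omega
  have hgoff : ∀ s s', s ≠ s' → s' ≠ i → g s s' = 0 := by
    intro s s' hss hsi
    by_cases h : 0 ≤ ℓ s
    · rw [hgdef]; simp only [if_pos h]; exact Pi.single_eq_of_ne (Ne.symm hss) 1
    · rw [hgdef]; simp only [if_neg h, Pi.add_apply,
        Pi.single_eq_of_ne (Ne.symm hss), Pi.single_eq_of_ne hsi, add_zero]
  have hginj : Function.Injective g := by
    intro t t' h
    by_contra hne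
    by_cases ht' : t' = i
    · have hti : t ≠ i := fun he => hne (he.trans ht'.symm)
      have h1 : g t' t = 0 := hgoff t' t (fun he => hne he.symm) hti
      have h2 : g t t = 1 := hgdiag t
      rw [h] at h2; omega
    · have h1 : g t t' = 0 := hgoff t t' hne ht'
      have h2 : g t' t' = 1 := hgdiag t'
      rw [← h] at h2; omega
  have hSim : S = Finset.image g Finset.univ := by
    apply (Finset.eq_of_subset_of_card_le ?_ ?_).symm
    · intro x hx
      obtain ⟨t, _, ht⟩ := Finset.mem_image.mp hx
      rw [← ht]; exact hgS t
    · rw [hcard, Finset.card_image_of_injective _ hginj, Finset.card_univ, Fintype.card_fin]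
  -- uniqueness of the positive index
  have huniq : ∀ i', 0 < ℓ i' → i' = i := by
    intro i' hi'
    by_contra hne
    have hex' := hexgen i' hi'
    set m' : ℕ := Nat.find (hex' k0) with hm'def
    have hm'spec : 0 ≤ (m' : ℤ) * ℓ i' + ℓ k0 := Nat.find_spec (hex' k0)
    have hm'min : ∀ n : ℕ, 0 ≤ (n : ℤ) * ℓ i' + ℓ k0 → m' ≤ n :=
      fun n h => Nat.find_min' (hex' k0) h
    have hm'pos : 1 ≤ m' := by
      rcases Nat.eq_zero_or_pos m' with h0 | h0
      · rw [h0] at hm'spec; simp at hm'spec; omega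
      · exact h0
    have hk0i' : k0 ≠ i' := fun he => by rw [he] at hk0; omega
    have hAS : (Pi.single k0 1 + Pi.single i' m' : Fin r → ℕ) ∈ S :=
      atom_mem _ (A_memH hk0i' hm'spec) (A_isAt hk0 hi' hm'min)
    rw [hSim] at hAS
    obtain ⟨t, _, ht⟩ := Finset.mem_image.mp hAS
    have hvi' : (Pi.single k0 1 + Pi.single i' m' : Fin r → ℕ) i' = m' := by
      simp [Pi.single_eq_of_ne (Ne.symm hk0i'), Pi.single_eq_same]
    have hvk0 : (Pi.single k0 1 + Pi.single i' m' : Fin r → ℕ) k0 = 1 := by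
      simp [Pi.single_eq_same, Pi.single_eq_of_ne hk0i']
    by_cases hti' : t = i'
    · -- then g t = Pi.single i' 1, but the atom has k0-coordinate 1
      have h1 : g t k0 = 0 := hgoff t k0 (fun he => hk0i' (he.symm.trans hti')) (fun he => by
        rw [he] at hk0; omega)
      rw [ht] at h1; omega
    · have h1 : g t i' = 0 := hgoff t i' (fun he => hti' he) hne
      rw [ht] at h1; omega
  refine ⟨i, hi, huniq, ?_⟩
  -- divisibility
  intro j
  rcases lt_trichotomy (ℓ j) 0 with hj | hj | hj
  · -- the main case
    have hji : j ≠ i := fun he => by rw [he] at hj; omega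
    set d : ℕ := (ℓ i).toNat with hddef
    set c : ℕ := (-(ℓ j)).toNat with hcdef
    have hdz : (d : ℤ) = ℓ i := Int.toNat_of_nonneg (le_of_lt hi)
    have hcz : (c : ℤ) = -(ℓ j) := Int.toNat_of_nonneg (by omega)
    set a : Fin r → ℕ := d • Pi.single j 1 + c • Pi.single i 1 with hadef
    have haj : a j = d := by
      rw [hadef]; simp [Pi.single_eq_same, Pi.single_eq_of_ne hji]
    have hai : a i = c := by
      rw [hadef]; simp [Pi.single_eq_same, Pi.single_eq_of_ne (Ne.symm hji)]
    have haoth : ∀ t, t ≠ j → t ≠ i → a t = 0 := by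
      intro t htj hti
      rw [hadef]; simp [Pi.single_eq_of_ne htj, Pi.single_eq_of_ne hti]
    have haH : a ∈ Hmono r ℓ := by
      rw [Hmem, sum_pair_supp hji haoth, haj, hai, hdz, hcz]
      ring_nf
      omega
    have ha' : a ∈ AddSubmonoid.closure (S : Set (Fin r → ℕ)) := by rw [hclos]; exact haH
    obtain ⟨f, hf⟩ := exists_rep ha'
    rw [hSim, Finset.sum_image (fun x _ y _ h => hginj h)] at hf
    -- coordinate j
    have hcoordj : ∑ t, f (g t) * g t j = d := by
      have := congrFun hf j
      rw [Finset.sum_apply] at this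
      simpa [haj] using this
    have hfj : f (g j) = d := by
      rw [Finset.sum_eq_single j] at hcoordj
      · rw [hgdiag j, mul_one] at hcoordj; exact hcoordj
      · intro t _ htj
        rw [hgoff t j htj hji, mul_zero]
      · simp
    -- coordinate i
    have hcoordi : ∑ t, f (g t) * g t i = c := by
      have := congrFun hf i
      rw [Finset.sum_apply] at this
      simpa [hai] using this
    have hgji : g j i = m j := by
      rw [hgdef]; simp only [if_neg (not_le.mpr hj), Pi.add_apply,
        Pi.single_eq_of_ne (Ne.symm hji), Pi.single_eq_same, zero_add]
    have hle : d * m j ≤ c := by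
      calc d * m j = f (g j) * g j i := by rw [hfj, hgji]
        _ ≤ ∑ t, f (g t) * g t i :=
          Finset.single_le_sum (f := fun t => f (g t) * g t i)
            (fun t _ => Nat.zero_le _) (Finset.mem_univ j)
        _ = c := hcoordi
    have hge : (c : ℤ) ≤ (d : ℤ) * m j := by
      have := hmspec j
      rw [hdz]
      have : (m j : ℤ) * ℓ i ≥ -(ℓ j) := by linarith [hmspec j]
      rw [hcz]; linarith
    have heq : (c : ℤ) = (d : ℤ) * m j := by
      have : (d * m j : ℕ) ≤ c := hle
      push_cast at this
      linarith
    refine ⟨-(m j : ℤ), ?_⟩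
    rw [← hdz]
    have : (ℓ j) = -(c : ℤ) := by omega
    rw [this, heq]; ring
  · rw [hj]; exact dvd_zero _
  · rw [huniq j hj]
end

section
/- Suppose there is an index i₀ with ℓ_{i₀} > 0, with ℓ_j ≤ 0 for all j ≠ i₀, and with ℓ_{i₀} dividing ℓ_j for every j; for j ≠ i₀ set m_j = (−ℓ_j)/ℓ_{i₀} ∈ ℕ. Then for every n ∈ ℕ, the (finite) number of elements a ∈ H(ℓ) with |a| = n equals the number of vectors b ∈ (Fin r → ℕ) satisfying b_{i₀} + Σ_{j ≠ i₀} (m_j + 1)·b_j = n, i.e. the Hilbert function of F[H(s₀)] at n is the restricted partition function p_{(1, m_2+1, …)}(n). -/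
lemma hmono_mem_iff (r : ℕ) (ℓ : Fin r → ℤ) (i₀ : Fin r)
    (hi₀ : 0 < ℓ i₀) (m : Fin r → ℕ)
    (hm : ∀ j, j ≠ i₀ → (m j : ℤ) * ℓ i₀ = -ℓ j) (a : Fin r → ℕ) :
    a ∈ Hmono r ℓ ↔ ∑ j ∈ Finset.univ.erase i₀, m j * a j ≤ a i₀ := by
  have hmem : a ∈ Hmono r ℓ ↔ 0 ≤ ∑ i, (a i : ℤ) * ℓ i := Iff.rfl
  rw [hmem]
  have hsplit : ∑ i, (a i : ℤ) * ℓ i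
      = ((a i₀ : ℤ) - ∑ j ∈ Finset.univ.erase i₀, (m j : ℤ) * a j) * ℓ i₀ := by
    rw [← Finset.add_sum_erase _ _ (Finset.mem_univ i₀), sub_mul, Finset.sum_mul]
    congr 1
    rw [← neg_neg (∑ j ∈ Finset.univ.erase i₀, (a j : ℤ) * ℓ j), ← Finset.sum_neg_distrib]
    congr 1
    apply Finset.sum_congr rfl
    intro j hj
    have hj' : j ≠ i₀ := Finset.ne_of_mem_erase hj
    have := hm j hj'
    have : (ℓ j) = -((m j : ℤ) * ℓ i₀) := by linarith
    rw [this]; ring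
  rw [hsplit]
  rw [mul_nonneg_iff_of_pos_right hi₀, sub_nonneg]
  exact ⟨fun h => by exact_mod_cast h, fun h => by exact_mod_cast h⟩

/-- Under the divisibility hypotheses, the Hilbert function of `F[H(s₀)]`: the number of
elements of `H(ℓ)` of total degree `n` is the restricted partition function
`p_{(1, m₂+1, …, m_q+1, 1, …, 1)}(n)`. -/
theorem stmt6 (r : ℕ) (ℓ : Fin r → ℤ) (i₀ : Fin r)
    (hi₀ : 0 < ℓ i₀) (hneg : ∀ j, j ≠ i₀ → ℓ j ≤ 0) (hdvd : ∀ j, ℓ i₀ ∣ ℓ j)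
    (m : Fin r → ℕ) (hm : ∀ j, j ≠ i₀ → (m j : ℤ) * ℓ i₀ = -ℓ j) (n : ℕ) :
    {a : Fin r → ℕ | a ∈ Hmono r ℓ ∧ ∑ i, a i = n}.Finite ∧
    {a : Fin r → ℕ | a ∈ Hmono r ℓ ∧ ∑ i, a i = n}.ncard =
      {b : Fin r → ℕ | b i₀ + ∑ j ∈ Finset.univ.erase i₀, (m j + 1) * b j = n}.ncard := by
  set E := Finset.univ.erase i₀ with hE
  set S : Set (Fin r → ℕ) := {a | a ∈ Hmono r ℓ ∧ ∑ i, a i = n} with hS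
  set T : Set (Fin r → ℕ) := {b | b i₀ + ∑ j ∈ E, (m j + 1) * b j = n} with hT
  have hiff := hmono_mem_iff r ℓ i₀ hi₀ m hm
  -- Finiteness of S
  have hfin : S.Finite := by
    apply Set.Finite.subset (Set.Finite.pi (fun i : Fin r => Set.finite_Iic n))
    intro a ha
    simp only [Set.mem_pi, Set.mem_univ, Set.mem_Iic, forall_true_left]
    intro i
    rw [← ha.2]
    exact Finset.single_le_sum (fun j _ => Nat.zero_le _) (Finset.mem_univ i)
  refine ⟨hfin, ?_⟩
  -- the map
  set f : (Fin r → ℕ) → (Fin r → ℕ) :=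
    fun a => Function.update a i₀ (a i₀ - ∑ j ∈ E, m j * a j) with hf
  have hfE : ∀ (a : Fin r → ℕ) (j : Fin r), j ∈ E → f a j = a j := by
    intro a j hj
    exact Function.update_of_ne (Finset.ne_of_mem_erase hj) _ a
  have hfi₀ : ∀ a : Fin r → ℕ, f a i₀ = a i₀ - ∑ j ∈ E, m j * a j := by
    intro a; exact Function.update_self _ _ _
  have himg : f '' S = T := by
    apply Set.eq_of_subset_of_subset
    · rintro b ⟨a, ⟨hamem, hasum⟩, rfl⟩
      have hle : ∑ j ∈ E, m j * a j ≤ a i₀ := (hiff a).mp hamem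
      simp only [hT, Set.mem_setOf_eq]
      have : ∑ j ∈ E, (m j + 1) * f a j = (∑ j ∈ E, m j * a j) + ∑ j ∈ E, a j := by
        rw [← Finset.sum_add_distrib]
        apply Finset.sum_congr rfl
        intro j hj
        rw [hfE a j hj]; ring
      rw [hfi₀, this, ← add_assoc, Nat.sub_add_cancel hle, ← hasum,
        ← Finset.add_sum_erase _ _ (Finset.mem_univ i₀)]
    · intro b hb
      simp only [hT, Set.mem_setOf_eq] at hb
      set a : Fin r → ℕ := Function.update b i₀ (b i₀ + ∑ j ∈ E, m j * b j) with ha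
      have haE : ∀ j ∈ E, a j = b j := fun j hj =>
        Function.update_of_ne (Finset.ne_of_mem_erase hj) _ b
      have hai₀ : a i₀ = b i₀ + ∑ j ∈ E, m j * b j := Function.update_self _ _ _
      have hsumE : ∑ j ∈ E, m j * a j = ∑ j ∈ E, m j * b j :=
        Finset.sum_congr rfl (fun j hj => by rw [haE j hj])
      refine ⟨a, ⟨?_, ?_⟩, ?_⟩
      · rw [hiff a, hsumE, hai₀]
        exact Nat.le_add_left _ _
      · rw [← Finset.add_sum_erase _ _ (Finset.mem_univ i₀), hai₀, ← hb]
        rw [add_assoc, add_comm (∑ j ∈ E, m j * b j)]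
        congr 1
        rw [add_comm, ← Finset.sum_add_distrib]
        apply Finset.sum_congr rfl
        intro j hj
        rw [haE j hj]; ring
      · funext j
        by_cases hj : j = i₀
        · subst hj
          rw [hfi₀, hsumE, hai₀, Nat.add_sub_cancel]
        · rw [hfE a j (Finset.mem_erase.mpr ⟨hj, Finset.mem_univ j⟩),
            haE j (Finset.mem_erase.mpr ⟨hj, Finset.mem_univ j⟩)]
  have hinj : S.InjOn f := by
    intro a ha a' ha' hfa
    have hle : ∑ j ∈ E, m j * a j ≤ a i₀ := (hiff a).mp ha.1
    have hle' : ∑ j ∈ E, m j * a' j ≤ a' i₀ := (hiff a').mp ha'.1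
    have hEeq : ∀ j ∈ E, a j = a' j := by
      intro j hj
      rw [← hfE a j hj, ← hfE a' j hj, hfa]
    have hsumeq : ∑ j ∈ E, m j * a j = ∑ j ∈ E, m j * a' j :=
      Finset.sum_congr rfl (fun j hj => by rw [hEeq j hj])
    have h0 : a i₀ - ∑ j ∈ E, m j * a j = a' i₀ - ∑ j ∈ E, m j * a' j := by
      rw [← hfi₀, ← hfi₀, hfa]
    have hi₀eq : a i₀ = a' i₀ := by omega
    funext j
    by_cases hj : j = i₀
    · subst hj; exact hi₀eq
    · exact hEeq j (Finset.mem_erase.mpr ⟨hj, Finset.mem_univ j⟩)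
  calc S.ncard = (f '' S).ncard := (Set.ncard_image_of_injOn hinj).symm
    _ = T.ncard := by rw [himg]
end

section
/- Let r ≥ 2, let 2 ≤ q ≤ r, and let m_2, …, m_q be positive integers. Let H be the additive submonoid of (Fin r → ℕ) generated by e_1, the elements m_j·e_1 + e_j for 2 ≤ j ≤ q, and the elements e_j for q < j ≤ r. Then for every t with 1 ≤ t ≤ r−1, the number of subsets S ⊆ Fin r with |S| = t that arise as S = supp(a) for some a ∈ H equals C(r−1, t−1) + C(r−q, t). -/
/-- For the submonoid `H` generated by `e₁`, `m_j•e₁ + e_j` for `2 ≤ j ≤ q`, and `e_j` for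
`q < j ≤ r` (indices written 1-based; here `Fin r` is 0-based, so `e₁` is `Pi.single ⟨0,_⟩ 1`),
the number of supports of elements of `H` of size `t` is `C(r-1,t-1) + C(r-q,t)`. -/
theorem stmt7 (r q : ℕ) (hr : 2 ≤ r) (hq2 : 2 ≤ q) (hqr : q ≤ r)
    (m : Fin r → ℕ) (hm : ∀ j : Fin r, 1 ≤ j.val → j.val < q → 0 < m j)
    (H : AddSubmonoid (Fin r → ℕ))
    (hH : H = AddSubmonoid.closure
      ({Pi.single (⟨0, by omega⟩ : Fin r) 1} ∪
       {v | ∃ j : Fin r, 1 ≤ j.val ∧ j.val < q ∧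
          v = m j • Pi.single (⟨0, by omega⟩ : Fin r) 1 + Pi.single j 1} ∪
       {v | ∃ j : Fin r, q ≤ j.val ∧ v = Pi.single j 1})) :
    ∀ t, 1 ≤ t → t ≤ r - 1 →
      {S : Finset (Fin r) | S.card = t ∧ ∃ a ∈ H, ∀ i, i ∈ S ↔ a i ≠ 0}.ncard =
        Nat.choose (r - 1) (t - 1) + Nat.choose (r - q) t := by
  intro t ht1 ht2
  have h0r : 0 < r := by omega
  set O : Fin r := ⟨0, h0r⟩ with hO
  have hOval : O.val = 0 := rfl
  -- the invariant: if a j ≠ 0 for some 1 ≤ j < q then a O ≠ 0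
  have key : ∀ a ∈ H, ∀ j : Fin r, 1 ≤ j.val → j.val < q → a j ≠ 0 → a O ≠ 0 := by
    rw [hH]
    intro a ha
    induction ha using AddSubmonoid.closure_induction with
    | mem x hx =>
      intro j hj1 hj2 hxj
      rcases hx with (hx | hx) | hx
      · exfalso
        rw [Set.mem_singleton_iff] at hx
        subst hx
        apply hxj
        rw [Pi.single_apply, if_neg]
        intro h
        rw [h] at hj1
        simp [O] at hj1
      · obtain ⟨j', h1, h2, rfl⟩ := hx
        have hmj := hm j' h1 h2
        simp only [Pi.add_apply, Pi.smul_apply, Pi.single_apply, smul_eq_mul, if_pos rfl]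
        split_ifs <;> omega
      · obtain ⟨j', h1, rfl⟩ := hx
        exfalso
        apply hxj
        rw [Pi.single_apply, if_neg]
        intro h
        rw [h] at hj2
        omega
    | zero =>
      intro j _ _ h
      simp at h
    | add a b ha hb iha ihb =>
      intro j hj1 hj2 hab
      have : a j ≠ 0 ∨ b j ≠ 0 := by
        by_contra h
        push_neg at h
        apply hab
        simp [h.1, h.2]
      simp only [Pi.add_apply]
      rcases this with h | h
      · have := iha j hj1 hj2 h; omega
      · have := ihb j hj1 hj2 h; omega
  -- construction of elements with prescribed support
  set c : Fin r → ℕ := fun i => if 1 ≤ i.val ∧ i.val < q then m i else 0 with hc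
  set g : Fin r → (Fin r → ℕ) := fun i => Pi.single i 1 + c i • Pi.single O 1 with hg
  have hgmem : ∀ i, g i ∈ H := by
    intro i
    rw [hH]
    apply AddSubmonoid.subset_closure
    rcases lt_trichotomy i.val 0 with h | h | h
    · omega
    · left; left
      have hi : i = O := by apply Fin.ext; simp [h, O]
      simp only [Set.mem_singleton_iff, hg, hc, hi]
      rw [if_neg (by omega)]
      simp
    · rcases lt_or_ge i.val q with h2 | h2
      · left; right
        refine ⟨i, by omega, h2, ?_⟩
        simp only [hg, hc]
        rw [if_pos ⟨by omega, h2⟩, add_comm]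
      · right
        refine ⟨i, h2, ?_⟩
        simp only [hg, hc]
        rw [if_neg (by omega)]
        simp
  -- the supports condition, reduced to combinatorics
  set highs : Finset (Fin r) := Finset.univ.filter (fun i => q ≤ i.val) with hhighs
  have hchar : ∀ S : Finset (Fin r),
      (S.card = t ∧ ∃ a ∈ H, ∀ i, i ∈ S ↔ a i ≠ 0) ↔ (S.card = t ∧ (O ∈ S ∨ S ⊆ highs)) := by
    intro S
    constructor
    · rintro ⟨hcard, a, haH, hsupp⟩
      refine ⟨hcard, ?_⟩
      by_cases hOS : O ∈ S
      · left; exact hOS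
      · right
        intro j hj
        have haO : a O = 0 := by
          by_contra h
          exact hOS ((hsupp O).mpr h)
        have hj0 : 1 ≤ j.val := by
          rcases Nat.eq_zero_or_pos j.val with h | h
          · exfalso; apply hOS
            have : j = O := by apply Fin.ext; simp [h, O]
            rwa [this] at hj
          · exact h
        simp only [hhighs, Finset.mem_filter, Finset.mem_univ, true_and]
        by_contra h
        push_neg at h
        exact (key a haH j hj0 h ((hsupp j).mp hj)) haO
    · rintro ⟨hcard, hS⟩
      refine ⟨hcard, ∑ i ∈ S, g i, AddSubmonoid.sum_mem H (fun i _ => hgmem i), ?_⟩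
      have hvalne : ∀ j : Fin r, j ≠ O → ((∑ i ∈ S, g i) j = if j ∈ S then 1 else 0) := by
        intro j hjO
        have hterm : ∀ i ∈ S, g i j = if j = i then 1 else 0 := by
          intro i _
          simp only [hg, Pi.add_apply, Pi.smul_apply, Pi.single_apply, smul_eq_mul,
            if_neg hjO, mul_zero, add_zero]
        rw [Finset.sum_apply, Finset.sum_congr rfl hterm, Finset.sum_ite_eq]
      intro i
      by_cases hiO : i = O
      · subst hiO
        rcases hS with hOS | hSh
        · simp only [hOS, true_iff]
          intro h
          rw [Finset.sum_apply] at h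
          have := (Finset.sum_eq_zero_iff.mp h) O hOS
          simp only [hg, Pi.add_apply, Pi.smul_apply, Pi.single_apply, if_pos rfl,
            smul_eq_mul, mul_one] at this
          simp at this
        · have hOS : O ∉ S := by
            intro h
            have := hSh h
            simp only [hhighs, Finset.mem_filter, Finset.mem_univ, true_and] at this
            omega
          have hzero : (∑ i ∈ S, g i) O = 0 := by
            rw [Finset.sum_apply]
            apply Finset.sum_eq_zero
            intro k hk
            have hq' : q ≤ k.val := by
              have := hSh hk
              simpa [hhighs] using this
            have hkO : O ≠ k := by
              intro h
              rw [← h] at hq'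
              omega
            have hcz : c k = 0 := by
              simp only [hc]
              exact if_neg (by omega)
            simp [hg, hcz, Pi.single_apply, hkO]
          simp [hOS, hzero]
      · rw [hvalne i hiO]
        by_cases hiS : i ∈ S <;> simp [hiS]
  -- reduce to a Finset computation
  have hsetEq : {S : Finset (Fin r) | S.card = t ∧ ∃ a ∈ H, ∀ i, i ∈ S ↔ a i ≠ 0}
      = ↑((Finset.univ.powersetCard t).filter (fun S => O ∈ S ∨ S ⊆ highs)) := by
    ext S
    simp only [Set.mem_setOf_eq, Finset.coe_filter, Finset.mem_powersetCard, Set.mem_setOf_eq]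
    rw [hchar S]
    constructor
    · rintro ⟨h1, h2⟩; exact ⟨⟨Finset.subset_univ S, h1⟩, h2⟩
    · rintro ⟨⟨_, h1⟩, h2⟩; exact ⟨h1, h2⟩
  rw [hsetEq, Set.ncard_coe_finset, Finset.filter_or]
  have hdisj : Disjoint ((Finset.univ.powersetCard t).filter (fun S => O ∈ S))
      ((Finset.univ.powersetCard t).filter (fun S => S ⊆ highs)) := by
    rw [Finset.disjoint_left]
    intro S h1 h2
    rw [Finset.mem_filter] at h1 h2
    have := h2.2 h1.2
    simp only [hhighs, Finset.mem_filter, Finset.mem_univ, true_and] at this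
    omega
  rw [Finset.card_union_of_disjoint hdisj]
  congr 1
  · -- subsets of size t containing O
    have hpc := Finset.card_powersetCard (t-1) (Finset.univ.erase O)
    rw [Finset.card_erase_of_mem (Finset.mem_univ O), Finset.card_univ, Fintype.card_fin] at hpc
    rw [← hpc]
    apply Finset.card_bij' (fun S _ => S.erase O) (fun T _ => insert O T)
    · intro S hS
      simp only [Finset.mem_filter, Finset.mem_powersetCard] at hS
      exact Finset.insert_erase hS.2
    · intro T hT
      simp only [Finset.mem_powersetCard] at hT
      exact Finset.erase_insert (fun h => (Finset.notMem_erase O Finset.univ) (hT.1 h))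
    · intro S hS
      simp only [Finset.mem_filter, Finset.mem_powersetCard] at hS ⊢
      exact ⟨Finset.erase_subset_erase O hS.1.1,
        by rw [Finset.card_erase_of_mem hS.2, hS.1.2]⟩
    · intro T hT
      simp only [Finset.mem_powersetCard] at hT
      have hOT : O ∉ T := fun h => (Finset.notMem_erase O Finset.univ) (hT.1 h)
      simp only [Finset.mem_filter, Finset.mem_powersetCard]
      refine ⟨⟨Finset.subset_univ _, ?_⟩, Finset.mem_insert_self O T⟩
      rw [Finset.card_insert_of_notMem hOT, hT.2]
      omega
  · -- subsets of size t inside highs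
    have heq : (Finset.univ.powersetCard t).filter (fun S => S ⊆ highs)
        = highs.powersetCard t := by
      ext S
      rw [Finset.mem_filter, Finset.mem_powersetCard, Finset.mem_powersetCard]
      constructor
      · rintro ⟨⟨_, hcS⟩, hs⟩; exact ⟨hs, hcS⟩
      · rintro ⟨hs, hcS⟩; exact ⟨⟨Finset.subset_univ _, hcS⟩, hs⟩
    rw [heq, Finset.card_powersetCard]
    congr 1
    -- highs.card = r - q
    rcases eq_or_lt_of_le hqr with h | h
    · have : highs = ∅ := by
        ext i
        simp only [hhighs, Finset.mem_filter, Finset.mem_univ, true_and,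
          Finset.notMem_empty, iff_false]
        omega
      rw [this]
      simp [← h]
    · have : highs = Finset.Ici (⟨q, h⟩ : Fin r) := by
        ext i
        simp [hhighs, Finset.mem_Ici, Fin.le_def]
      rw [this, Fin.card_Ici]
end

section
/- Assume r ≥ 2 and the positivity hypothesis. The following are equivalent: (1) H(ℓ) = (Fin r → ℕ) (Artin's conjecture holds at s₀); (2) H(ℓ) can be generated by r elements as an additive monoid, and L_t(ℓ) ≥ N_t for every t with 1 ≤ t ≤ r−1; (3) H(ℓ) can be generated by r elements as an additive monoid, and L_t(ℓ) ≥ N_t for some t with 1 ≤ t ≤ r−1. -/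
/-- `L_t(ℓ)`: the number of `t`-element subsets of `Fin r` arising as supports of elements
of `H(ℓ)`. -/
noncomputable def Lfun (r : ℕ) (ℓ : Fin r → ℤ) (t : ℕ) : ℕ :=
  {S : Finset (Fin r) | S.card = t ∧ ∃ a ∈ Hmono r ℓ, ∀ i, i ∈ S ↔ a i ≠ 0}.ncard

/-- `N_t = min (C(r-1,t-1) + C(r-2,t) + 1) (C(r,t))`. -/
def Nfun (r t : ℕ) : ℕ :=
  min (Nat.choose (r - 1) (t - 1) + Nat.choose (r - 2) t + 1) (Nat.choose r t)

namespace Stmt8Aux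

lemma mem_Hmono {r : ℕ} {ℓ : Fin r → ℤ} {a : Fin r → ℕ} :
    a ∈ Hmono r ℓ ↔ 0 ≤ ∑ i, (a i : ℤ) * ℓ i := Iff.rfl

/-- sum of a weight supported on `{i, j}` -/
lemma sum_two {r : ℕ} (ℓ : Fin r → ℤ) {i j : Fin r} (hij : i ≠ j) (w : Fin r → ℕ)
    (hw : ∀ k, k ≠ i → k ≠ j → w k = 0) :
    ∑ k, (w k : ℤ) * ℓ k = (w i : ℤ) * ℓ i + (w j : ℤ) * ℓ j := by
  rw [← Finset.sum_subset (Finset.subset_univ ({i, j} : Finset (Fin r)))]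
  · rw [Finset.sum_pair hij]
  · intro k _ hk
    simp only [Finset.mem_insert, Finset.mem_singleton, not_or] at hk
    rw [hw k hk.1 hk.2]
    simp

lemma sum_single {r : ℕ} (ℓ : Fin r → ℤ) (i : Fin r) :
    ∑ k, ((Pi.single i 1 : Fin r → ℕ) k : ℤ) * ℓ k = ℓ i := by
  rw [Finset.sum_eq_single i]
  · simp
  · intro b _ hb
    rw [Pi.single_eq_of_ne hb]
    simp
  · intro h; exact absurd (Finset.mem_univ i) h

/-- atom (irreducible element) of the monoid `H(ℓ)` -/
def Atom (r : ℕ) (ℓ : Fin r → ℤ) (x : Fin r → ℕ) : Prop :=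
  x ∈ Hmono r ℓ ∧ x ≠ 0 ∧
    ∀ u v, u ∈ Hmono r ℓ → v ∈ Hmono r ℓ → u + v = x → u = 0 ∨ v = 0

lemma exists_multiset_of_mem_closure {M : Type*} [AddCommMonoid M] {S : Set M} {x : M}
    (hx : x ∈ AddSubmonoid.closure S) :
    ∃ m : Multiset M, (∀ z ∈ m, z ∈ S) ∧ m.sum = x := by
  refine AddSubmonoid.closure_induction ?_ ?_ ?_ hx
  · intro z hz
    exact ⟨{z}, by simpa using hz, by simp⟩
  · exact ⟨0, by simp, rfl⟩
  · rintro a b _ _ ⟨m1, hm1, h1⟩ ⟨m2, hm2, h2⟩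
    refine ⟨m1 + m2, ?_, by simp [h1, h2]⟩
    intro z hz
    rcases Multiset.mem_add.1 hz with h | h
    · exact hm1 z h
    · exact hm2 z h

lemma atom_mem_of_sum {r : ℕ} {ℓ : Fin r → ℤ} {x : Fin r → ℕ} (hx : Atom r ℓ x) :
    ∀ m : Multiset (Fin r → ℕ), (∀ z ∈ m, z ∈ Hmono r ℓ) → m.sum = x → x ∈ m := by
  intro m
  induction m using Multiset.induction with
  | empty =>
      intro _ h
      simp only [Multiset.sum_zero] at h
      exact absurd h.symm hx.2.1
  | cons z m ih =>
      intro hmem hsum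
      rw [Multiset.sum_cons] at hsum
      have hzH : z ∈ Hmono r ℓ := hmem z (Multiset.mem_cons_self z m)
      have hmH : m.sum ∈ Hmono r ℓ :=
        AddSubmonoid.multiset_sum_mem _ m (fun y hy => hmem y (Multiset.mem_cons_of_mem hy))
      rcases hx.2.2 z m.sum hzH hmH hsum with h0 | h0
      · rw [h0, zero_add] at hsum
        exact Multiset.mem_cons_of_mem
          (ih (fun y hy => hmem y (Multiset.mem_cons_of_mem hy)) hsum)
      · rw [h0, add_zero] at hsum
        rw [← hsum]
        exact Multiset.mem_cons_self z m

lemma atom_mem {r : ℕ} {ℓ : Fin r → ℤ} {S : Finset (Fin r → ℕ)}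
    (hS : AddSubmonoid.closure (S : Set (Fin r → ℕ)) = Hmono r ℓ)
    {x : Fin r → ℕ} (hx : Atom r ℓ x) : x ∈ S := by
  have hmem : x ∈ AddSubmonoid.closure (S : Set (Fin r → ℕ)) := by rw [hS]; exact hx.1
  obtain ⟨m, hm, hsum⟩ := exists_multiset_of_mem_closure hmem
  have hmH : ∀ z ∈ m, z ∈ Hmono r ℓ := by
    intro z hz
    rw [← hS]
    exact AddSubmonoid.subset_closure (hm z hz)
  have := atom_mem_of_sum hx m hmH hsum
  exact hm x this

/-- the `e_i` atoms -/
lemma ee_atom {r : ℕ} {ℓ : Fin r → ℤ} {i : Fin r} (hi : 0 ≤ ℓ i) :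
    Atom r ℓ (Pi.single i 1) := by
  refine ⟨?_, ?_, ?_⟩
  · rw [mem_Hmono, sum_single]; exact hi
  · intro h
    have := congrFun h i
    simp at this
  · intro u v hu hv huv
    have huk : ∀ k, u k + v k = (Pi.single i 1 : Fin r → ℕ) k := by
      intro k
      have := congrFun huv k
      simpa using this
    have hi1 : u i + v i = 1 := by have := huk i; rwa [Pi.single_eq_same] at this
    have hoff : ∀ k, k ≠ i → u k = 0 ∧ v k = 0 := by
      intro k hk
      have := huk k
      rw [Pi.single_eq_of_ne hk] at this
      omega
    rcases Nat.eq_zero_or_pos (u i) with h0 | h0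
    · left
      funext k
      by_cases hk : k = i
      · subst hk; exact h0
      · exact (hoff k hk).1
    · right
      funext k
      by_cases hk : k = i
      · subst hk; simp only [Pi.zero_apply]; omega
      · exact (hoff k hk).2

/-- The primitive vector on the extreme ray mixing a positive and a negative coordinate. -/
def dd (r : ℕ) (ℓ : Fin r → ℤ) (i j : Fin r) : Fin r → ℕ := fun k =>
  if k = i then (ℓ j).natAbs / Nat.gcd (ℓ i).toNat (ℓ j).natAbs
  else if k = j then (ℓ i).toNat / Nat.gcd (ℓ i).toNat (ℓ j).natAbs
  else 0

section dd
variable {r : ℕ} {ℓ : Fin r → ℤ} {i j : Fin r}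

lemma dd_ne (hi : 0 < ℓ i) (hj : ℓ j < 0) : i ≠ j := by
  intro h; rw [h] at hi; omega

lemma dd_apply_i (hi : 0 < ℓ i) (hj : ℓ j < 0) :
    dd r ℓ i j i = (ℓ j).natAbs / Nat.gcd (ℓ i).toNat (ℓ j).natAbs := by
  simp [dd]

lemma dd_apply_j (hi : 0 < ℓ i) (hj : ℓ j < 0) :
    dd r ℓ i j j = (ℓ i).toNat / Nat.gcd (ℓ i).toNat (ℓ j).natAbs := by
  simp [dd, (dd_ne hi hj).symm]

lemma dd_apply_zero {k : Fin r} (hki : k ≠ i) (hkj : k ≠ j) : dd r ℓ i j k = 0 := by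
  simp [dd, hki, hkj]

lemma dd_pos_i (hi : 0 < ℓ i) (hj : ℓ j < 0) : 0 < dd r ℓ i j i := by
  rw [dd_apply_i hi hj]
  apply Nat.div_pos
  · exact Nat.le_of_dvd (by omega) (Nat.gcd_dvd_right _ _)
  · exact Nat.gcd_pos_of_pos_left _ (by omega)

lemma dd_pos_j (hi : 0 < ℓ i) (hj : ℓ j < 0) : 0 < dd r ℓ i j j := by
  rw [dd_apply_j hi hj]
  apply Nat.div_pos
  · exact Nat.le_of_dvd (by omega) (Nat.gcd_dvd_left _ _)
  · exact Nat.gcd_pos_of_pos_left _ (by omega)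

lemma key_nat {a b : ℕ} (ha : 0 < a) (hb : 0 < b) :
    b / Nat.gcd a b * a = a / Nat.gcd a b * b := by
  have hg : 0 < Nat.gcd a b := Nat.gcd_pos_of_pos_left _ ha
  have h1 : Nat.gcd a b * (b / Nat.gcd a b * a) = Nat.gcd a b * (a / Nat.gcd a b * b) := by
    rw [← mul_assoc, Nat.mul_div_cancel' (Nat.gcd_dvd_right a b),
      ← mul_assoc, Nat.mul_div_cancel' (Nat.gcd_dvd_left a b)]
    ring
  exact Nat.eq_of_mul_eq_mul_left hg h1

lemma dd_sum (hi : 0 < ℓ i) (hj : ℓ j < 0) :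
    ∑ k, ((dd r ℓ i j k : ℤ)) * ℓ k = 0 := by
  rw [sum_two ℓ (dd_ne hi hj) _ (fun k h1 h2 => dd_apply_zero h1 h2)]
  rw [dd_apply_i hi hj, dd_apply_j hi hj]
  obtain ⟨A, hA⟩ : ∃ A : ℕ, ℓ i = (A : ℤ) := ⟨(ℓ i).toNat, (Int.toNat_of_nonneg hi.le).symm⟩
  obtain ⟨B, hB⟩ : ∃ B : ℕ, ℓ j = -(B : ℤ) := ⟨(ℓ j).natAbs, by omega⟩
  have hA' : (ℓ i).toNat = A := by omega
  have hB' : (ℓ j).natAbs = B := by omega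
  rw [hA', hB', hA, hB]
  have hApos : 0 < A := by omega
  have hBpos : 0 < B := by omega
  have key := key_nat hApos hBpos
  have key' : ((B / Nat.gcd A B : ℕ) : ℤ) * (A : ℤ) = ((A / Nat.gcd A B : ℕ) : ℤ) * (B : ℤ) := by
    exact_mod_cast key
  linarith

lemma dd_mem (hi : 0 < ℓ i) (hj : ℓ j < 0) : dd r ℓ i j ∈ Hmono r ℓ := by
  rw [mem_Hmono, dd_sum hi hj]

/-- core numeric fact for atomicity of `dd` -/
lemma dd_core {a b u1 u2 v1 v2 : ℕ} (ha : 0 < a) (hb : 0 < b)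
    (hu : u1 * a = u2 * b) (hv : v1 * a = v2 * b)
    (hsum1 : u1 + v1 = b / Nat.gcd a b) (hsum2 : u2 + v2 = a / Nat.gcd a b) :
    (u1 = 0 ∧ u2 = 0) ∨ (v1 = 0 ∧ v2 = 0) := by
  have hg : 0 < Nat.gcd a b := Nat.gcd_pos_of_pos_left _ ha
  have hcop : Nat.Coprime (a / Nat.gcd a b) (b / Nat.gcd a b) :=
    Nat.coprime_div_gcd_div_gcd hg
  have hu' : u1 * (a / Nat.gcd a b) = u2 * (b / Nat.gcd a b) := by
    apply Nat.eq_of_mul_eq_mul_left hg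
    calc Nat.gcd a b * (u1 * (a / Nat.gcd a b))
        = u1 * (Nat.gcd a b * (a / Nat.gcd a b)) := by ring
      _ = u1 * a := by rw [Nat.mul_div_cancel' (Nat.gcd_dvd_left a b)]
      _ = u2 * b := hu
      _ = u2 * (Nat.gcd a b * (b / Nat.gcd a b)) := by
            rw [Nat.mul_div_cancel' (Nat.gcd_dvd_right a b)]
      _ = Nat.gcd a b * (u2 * (b / Nat.gcd a b)) := by ring
  have hv' : v1 * (a / Nat.gcd a b) = v2 * (b / Nat.gcd a b) := by
    apply Nat.eq_of_mul_eq_mul_left hg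
    calc Nat.gcd a b * (v1 * (a / Nat.gcd a b))
        = v1 * (Nat.gcd a b * (a / Nat.gcd a b)) := by ring
      _ = v1 * a := by rw [Nat.mul_div_cancel' (Nat.gcd_dvd_left a b)]
      _ = v2 * b := hv
      _ = v2 * (Nat.gcd a b * (b / Nat.gcd a b)) := by
            rw [Nat.mul_div_cancel' (Nat.gcd_dvd_right a b)]
      _ = Nat.gcd a b * (v2 * (b / Nat.gcd a b)) := by ring
  have ha'pos : 0 < a / Nat.gcd a b :=
    Nat.div_pos (Nat.le_of_dvd ha (Nat.gcd_dvd_left _ _)) hg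
  have hb'pos : 0 < b / Nat.gcd a b :=
    Nat.div_pos (Nat.le_of_dvd hb (Nat.gcd_dvd_right _ _)) hg
  rcases Nat.eq_zero_or_pos u1 with h0 | h0
  · left
    refine ⟨h0, ?_⟩
    rw [h0, zero_mul] at hu'
    rcases Nat.mul_eq_zero.1 hu'.symm with h | h
    · exact h
    · omega
  rcases Nat.eq_zero_or_pos v1 with h1 | h1
  · right
    refine ⟨h1, ?_⟩
    rw [h1, zero_mul] at hv'
    rcases Nat.mul_eq_zero.1 hv'.symm with h | h
    · exact h
    · omega
  exfalso
  have hdvdu : (b / Nat.gcd a b) ∣ u1 := by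
    have hd : (b / Nat.gcd a b) ∣ u1 * (a / Nat.gcd a b) := ⟨u2, by rw [hu']; ring⟩
    exact (Nat.Coprime.dvd_of_dvd_mul_right (Nat.Coprime.symm hcop) hd)
  have hdvdv : (b / Nat.gcd a b) ∣ v1 := by
    have hd : (b / Nat.gcd a b) ∣ v1 * (a / Nat.gcd a b) := ⟨v2, by rw [hv']; ring⟩
    exact (Nat.Coprime.dvd_of_dvd_mul_right (Nat.Coprime.symm hcop) hd)
  have h1' : b / Nat.gcd a b ≤ u1 := Nat.le_of_dvd h0 hdvdu
  have h2' : b / Nat.gcd a b ≤ v1 := Nat.le_of_dvd h1 hdvdv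
  omega

lemma dd_atom (hi : 0 < ℓ i) (hj : ℓ j < 0) : Atom r ℓ (dd r ℓ i j) := by
  refine ⟨dd_mem hi hj, ?_, ?_⟩
  · intro h
    have := congrFun h i
    have hpos := dd_pos_i hi hj
    rw [this] at hpos
    simp at hpos
  · intro u v hu hv huv
    have hij := dd_ne hi hj
    have huk : ∀ k, u k + v k = dd r ℓ i j k := by
      intro k
      have := congrFun huv k
      simpa using this
    have hoff : ∀ k, k ≠ i → k ≠ j → u k = 0 ∧ v k = 0 := by
      intro k h1 h2
      have := huk k
      rw [dd_apply_zero h1 h2] at this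
      exact Nat.add_eq_zero.1 this
    have hsu : ∑ k, (u k : ℤ) * ℓ k = (u i : ℤ) * ℓ i + (u j : ℤ) * ℓ j :=
      sum_two ℓ hij u (fun k h1 h2 => (hoff k h1 h2).1)
    have hsv : ∑ k, (v k : ℤ) * ℓ k = (v i : ℤ) * ℓ i + (v j : ℤ) * ℓ j :=
      sum_two ℓ hij v (fun k h1 h2 => (hoff k h1 h2).2)
    have hadd : (∑ k, (u k : ℤ) * ℓ k) + (∑ k, (v k : ℤ) * ℓ k) = 0 := by
      rw [← dd_sum hi hj (r := r), ← Finset.sum_add_distrib]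
      apply Finset.sum_congr rfl
      intro k _
      have := huk k
      push_cast [← this]
      ring
    have huz : ∑ k, (u k : ℤ) * ℓ k = 0 :=
      le_antisymm (by have := mem_Hmono.1 hv; omega) (mem_Hmono.1 hu)
    have hvz : ∑ k, (v k : ℤ) * ℓ k = 0 := by omega
    obtain ⟨A, hA⟩ : ∃ A : ℕ, ℓ i = (A : ℤ) := ⟨(ℓ i).toNat, (Int.toNat_of_nonneg hi.le).symm⟩
    obtain ⟨B, hB⟩ : ∃ B : ℕ, ℓ j = -(B : ℤ) := ⟨(ℓ j).natAbs, by omega⟩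
    have hA' : (ℓ i).toNat = A := by omega
    have hB' : (ℓ j).natAbs = B := by omega
    have hApos : 0 < A := by omega
    have hBpos : 0 < B := by omega
    rw [hsu, hA, hB] at huz
    rw [hsv, hA, hB] at hvz
    have huNat : u i * A = u j * B := by
      have h : (u i : ℤ) * (A : ℤ) = (u j : ℤ) * (B : ℤ) := by linarith
      exact_mod_cast h
    have hvNat : v i * A = v j * B := by
      have h : (v i : ℤ) * (A : ℤ) = (v j : ℤ) * (B : ℤ) := by linarith
      exact_mod_cast h
    have hsi : u i + v i = B / Nat.gcd A B := by
      have := huk i; rwa [dd_apply_i hi hj, hA', hB'] at this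
    have hsj : u j + v j = A / Nat.gcd A B := by
      have := huk j; rwa [dd_apply_j hi hj, hA', hB'] at this
    rcases dd_core hApos hBpos huNat hvNat hsi hsj with ⟨h1, h2⟩ | ⟨h1, h2⟩
    · left
      funext k
      by_cases hk1 : k = i
      · subst hk1; exact h1
      by_cases hk2 : k = j
      · subst hk2; exact h2
      · exact (hoff k hk1 hk2).1
    · right
      funext k
      by_cases hk1 : k = i
      · subst hk1; exact h1
      by_cases hk2 : k = j
      · subst hk2; exact h2
      · exact (hoff k hk1 hk2).2

end dd

lemma single_pos (r : ℕ) (i : Fin r) : (Pi.single i 1 : Fin r → ℕ) i = 1 := Pi.single_eq_same i 1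

lemma no_gen {r : ℕ} {ℓ : Fin r → ℤ} {i1 i2 j0 : Fin r}
    (h1 : 0 < ℓ i1) (h2 : 0 < ℓ i2) (h12 : i1 ≠ i2) (hj : ℓ j0 < 0)
    {S : Finset (Fin r → ℕ)} (hcard : S.card = r)
    (hclos : AddSubmonoid.closure (S : Set (Fin r → ℕ)) = Hmono r ℓ) : False := by
  classical
  set f : Fin r → (Fin r → ℕ) :=
    fun i => if 0 ≤ ℓ i then Pi.single i 1 else dd r ℓ i1 i with hf
  have hfS : ∀ i, f i ∈ S := by
    intro i
    by_cases hi : 0 ≤ ℓ i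
    · rw [hf]; simp only [if_pos hi]
      exact atom_mem hclos (ee_atom hi)
    · rw [hf]; simp only [if_neg hi]
      exact atom_mem hclos (dd_atom h1 (by omega))
  have hxS : dd r ℓ i2 j0 ∈ S := atom_mem hclos (dd_atom h2 hj)
  have hinj : Function.Injective f := by
    intro p q hpq
    rw [hf] at hpq
    simp only at hpq
    by_cases hp : 0 ≤ ℓ p <;> by_cases hq : 0 ≤ ℓ q
    · rw [if_pos hp, if_pos hq] at hpq
      by_contra hne
      have h := congrFun hpq p
      rw [Pi.single_eq_same, Pi.single_eq_of_ne hne] at h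
      exact one_ne_zero h
    · rw [if_pos hp, if_neg hq] at hpq
      exfalso
      have hq' : ℓ q < 0 := by omega
      have hpq' : p ≠ q := by intro h; rw [h] at hp; omega
      have h := congrFun hpq q
      rw [Pi.single_eq_of_ne (Ne.symm hpq')] at h
      have hpos := dd_pos_j h1 hq'
      omega
    · rw [if_neg hp, if_pos hq] at hpq
      exfalso
      have hp' : ℓ p < 0 := by omega
      have hpq' : q ≠ p := by intro h; rw [h] at hq; omega
      have h := congrFun hpq p
      rw [Pi.single_eq_of_ne (Ne.symm hpq')] at h
      have hpos := dd_pos_j h1 hp'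
      omega
    · rw [if_neg hp, if_neg hq] at hpq
      have hp' : ℓ p < 0 := by omega
      by_contra hne
      have hpi1 : p ≠ i1 := by intro h; rw [h] at hp'; omega
      have h := congrFun hpq p
      rw [dd_apply_zero hpi1 hne] at h
      have hpos := dd_pos_j h1 hp'
      omega
  have hx_ne : ∀ i, f i ≠ dd r ℓ i2 j0 := by
    intro i hcon
    rw [hf] at hcon
    simp only at hcon
    by_cases hi : 0 ≤ ℓ i
    · rw [if_pos hi] at hcon
      have hij0 : j0 ≠ i := by intro h; rw [h] at hj; omega
      have h := congrFun hcon j0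
      rw [Pi.single_eq_of_ne hij0] at h
      have hpos := dd_pos_j h2 hj
      omega
    · rw [if_neg hi] at hcon
      have hi' : ℓ i < 0 := by omega
      have hi1j0 : i1 ≠ j0 := by intro h; rw [h] at h1; omega
      have h := congrFun hcon i1
      rw [dd_apply_zero h12 hi1j0] at h
      have hpos := dd_pos_i h1 hi'
      omega
  have hnotmem : dd r ℓ i2 j0 ∉ Finset.image f Finset.univ := by
    rw [Finset.mem_image]
    rintro ⟨i, _, hi⟩
    exact hx_ne i hi
  have hsub : insert (dd r ℓ i2 j0) (Finset.image f Finset.univ) ⊆ S := by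
    intro x hx
    rcases Finset.mem_insert.1 hx with h | h
    · rw [h]; exact hxS
    · obtain ⟨i, _, hi⟩ := Finset.mem_image.1 h
      rw [← hi]; exact hfS i
  have hcard2 : (insert (dd r ℓ i2 j0) (Finset.image f Finset.univ)).card = r + 1 := by
    rw [Finset.card_insert_of_notMem hnotmem, Finset.card_image_of_injective _ hinj,
      Finset.card_univ, Fintype.card_fin]
  have := Finset.card_le_card hsub
  omega

lemma L_lt {r : ℕ} {ℓ : Fin r → ℤ} {i1 j0 : Fin r}
    (hi1 : 0 < ℓ i1) (hj0 : ℓ j0 < 0)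
    (huniq : ∀ i, 0 < ℓ i → i = i1) {t : ℕ} (ht1 : 1 ≤ t) (ht2 : t ≤ r - 1) :
    Lfun r ℓ t < Nfun r t := by
  classical
  have hr : 2 ≤ r := by
    have := j0.isLt
    have := i1.isLt
    have hne : i1 ≠ j0 := by intro h; rw [h] at hi1; omega
    have : (i1 : ℕ) ≠ (j0 : ℕ) := fun h => hne (Fin.ext h)
    omega
  set 𝒜 : Set (Finset (Fin r)) :=
    {S | S.card = t ∧ ∃ a ∈ Hmono r ℓ, ∀ i, i ∈ S ↔ a i ≠ 0} with hA
  have hLdef : Lfun r ℓ t = 𝒜.ncard := rfl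
  -- Step A: any support either contains i1 or consists of zero coordinates
  have hstepA : ∀ S ∈ 𝒜, S.card = t ∧ (i1 ∈ S ∨ ∀ i ∈ S, ℓ i = 0) := by
    rintro S ⟨hcard, a, haH, hsupp⟩
    refine ⟨hcard, ?_⟩
    by_contra hcon
    push_neg at hcon
    obtain ⟨hi1S, j, hjS, hjne⟩ := hcon
    have hjneg : ℓ j < 0 := by
      rcases lt_trichotomy (ℓ j) 0 with h | h | h
      · exact h
      · exact absurd h hjne
      · exact absurd hjS (by rw [huniq j h]; exact hi1S)
    have hterm : ∀ k, (a k : ℤ) * ℓ k ≤ 0 := by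
      intro k
      by_cases hk : a k = 0
      · simp [hk]
      · have hkS : k ∈ S := (hsupp k).2 hk
        have hk0 : ℓ k ≤ 0 := by
          by_contra hpos
          push_neg at hpos
          rw [huniq k hpos] at hkS
          exact hi1S hkS
        exact mul_nonpos_of_nonneg_of_nonpos (Int.natCast_nonneg _) hk0
    have hja : 0 < a j := Nat.pos_of_ne_zero ((hsupp j).1 hjS)
    have hjterm : (a j : ℤ) * ℓ j < 0 :=
      mul_neg_of_pos_of_neg (by exact_mod_cast hja) hjneg
    have hrest : ∑ k ∈ Finset.univ.erase j, (a k : ℤ) * ℓ k ≤ 0 :=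
      Finset.sum_nonpos (fun k _ => hterm k)
    have hsum : ∑ k, (a k : ℤ) * ℓ k < 0 := by
      rw [← Finset.add_sum_erase _ _ (Finset.mem_univ j)]
      linarith
    exact absurd (mem_Hmono.1 haH) (not_le.2 hsum)
  have hj0i1 : j0 ≠ i1 := by intro h; rw [h] at hj0; omega
  -- Bound 1 : Lfun ≤ C(r-1,t-1) + C(r-2,t)
  set G1 : Finset (Finset (Fin r)) :=
    (Finset.univ.powersetCard t).filter (fun S => i1 ∈ S) with hG1def
  set Zfin : Finset (Fin r) := Finset.univ.filter (fun i => ℓ i = 0) with hZdef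
  set G2 : Finset (Finset (Fin r)) := Zfin.powersetCard t with hG2def
  have hsub : 𝒜 ⊆ ↑(G1 ∪ G2) := by
    intro S hS
    obtain ⟨hcard, hor⟩ := hstepA S hS
    rw [Finset.coe_union]
    rcases hor with h | h
    · left
      rw [Finset.mem_coe, hG1def, Finset.mem_filter, Finset.mem_powersetCard]
      exact ⟨⟨Finset.subset_univ _, hcard⟩, h⟩
    · right
      rw [Finset.mem_coe, hG2def, Finset.mem_powersetCard]
      refine ⟨?_, hcard⟩
      intro k hk
      rw [hZdef, Finset.mem_filter]
      exact ⟨Finset.mem_univ _, h k hk⟩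
  have hL1 : Lfun r ℓ t ≤ G1.card + G2.card := by
    calc Lfun r ℓ t ≤ (↑(G1 ∪ G2) : Set (Finset (Fin r))).ncard := by
          rw [hLdef]; exact Set.ncard_le_ncard hsub (Finset.finite_toSet _)
      _ = (G1 ∪ G2).card := Set.ncard_coe_finset _
      _ ≤ G1.card + G2.card := Finset.card_union_le _ _
  have hG1 : G1.card ≤ (r - 1).choose (t - 1) := by
    have hmaps : ∀ S ∈ G1, S.erase i1 ∈ (Finset.univ.erase i1).powersetCard (t - 1) := by
      intro S hS
      rw [hG1def, Finset.mem_filter, Finset.mem_powersetCard] at hS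
      rw [Finset.mem_powersetCard]
      constructor
      · exact Finset.erase_subset_erase _ (Finset.subset_univ _)
      · rw [Finset.card_erase_of_mem hS.2, hS.1.2]
    have hinj : Set.InjOn (fun S : Finset (Fin r) => S.erase i1) (G1 : Set (Finset (Fin r))) := by
      intro S hS S' hS' h
      rw [Finset.mem_coe, hG1def, Finset.mem_filter] at hS hS'
      simp only at h
      rw [← Finset.insert_erase hS.2, h, Finset.insert_erase hS'.2]
    have := Finset.card_le_card_of_injOn _ hmaps hinj
    rwa [Finset.card_powersetCard, Finset.card_erase_of_mem (Finset.mem_univ _),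
      Finset.card_univ, Fintype.card_fin] at this
  have hZcard : Zfin.card ≤ r - 2 := by
    have hsubZ : Zfin ⊆ (Finset.univ.erase i1).erase j0 := by
      intro k hk
      rw [hZdef, Finset.mem_filter] at hk
      rw [Finset.mem_erase, Finset.mem_erase]
      refine ⟨?_, ?_, Finset.mem_univ _⟩
      · intro h; rw [h] at hk; omega
      · intro h; rw [h] at hk; omega
    have h1 := Finset.card_le_card hsubZ
    have h2 : j0 ∈ Finset.univ.erase i1 := Finset.mem_erase.2 ⟨hj0i1, Finset.mem_univ _⟩
    rw [Finset.card_erase_of_mem h2, Finset.card_erase_of_mem (Finset.mem_univ _),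
      Finset.card_univ, Fintype.card_fin] at h1
    omega
  have hG2 : G2.card ≤ (r - 2).choose t := by
    rw [hG2def, Finset.card_powersetCard]
    exact Nat.choose_le_choose t hZcard
  -- Bound 2 : Lfun < C(r,t)
  have hcarderase : (Finset.univ.erase i1).card = r - 1 := by
    rw [Finset.card_erase_of_mem (Finset.mem_univ _), Finset.card_univ, Fintype.card_fin]
  have hsingle : ({j0} : Finset (Fin r)) ⊆ Finset.univ.erase i1 := by
    intro k hk
    rw [Finset.mem_singleton] at hk
    rw [hk]
    exact Finset.mem_erase.2 ⟨hj0i1, Finset.mem_univ _⟩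
  obtain ⟨S0, hS0sub, hS0sub2, hS0card⟩ :=
    Finset.exists_subsuperset_card_eq (n := t) hsingle (by simp; omega) (by rw [hcarderase]; omega)
  have hS0not : S0 ∉ 𝒜 := by
    intro hmem
    obtain ⟨_, hor⟩ := hstepA S0 hmem
    rcases hor with h | h
    · exact (Finset.mem_erase.1 (hS0sub2 h)).1 rfl
    · have hj0S0 : j0 ∈ S0 := hS0sub (Finset.mem_singleton_self _)
      have := h j0 hj0S0
      omega
  have hsub2 : 𝒜 ⊆ ↑((Finset.univ.powersetCard t).erase S0) := by
    intro S hS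
    rw [Finset.mem_coe, Finset.mem_erase]
    constructor
    · intro h; rw [h] at hS; exact hS0not hS
    · exact Finset.mem_powersetCard.2 ⟨Finset.subset_univ _, (hstepA S hS).1⟩
  have hmem0 : S0 ∈ Finset.univ.powersetCard t :=
    Finset.mem_powersetCard.2 ⟨Finset.subset_univ _, hS0card⟩
  have hchoosepos : 0 < r.choose t := Nat.choose_pos (by omega)
  have hL2 : Lfun r ℓ t < r.choose t := by
    have hstep : Lfun r ℓ t ≤ ((Finset.univ.powersetCard t).erase S0).card := by
      calc Lfun r ℓ t ≤ (↑((Finset.univ.powersetCard t).erase S0) : Set (Finset (Fin r))).ncard := by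
            rw [hLdef]; exact Set.ncard_le_ncard hsub2 (Finset.finite_toSet _)
        _ = _ := Set.ncard_coe_finset _
    rw [Finset.card_erase_of_mem hmem0, Finset.card_powersetCard,
      Finset.card_univ, Fintype.card_fin] at hstep
    omega
  rw [Nfun]
  apply lt_min
  · omega
  · exact hL2

lemma top_of_nonneg {r : ℕ} {ℓ : Fin r → ℤ} (h : ∀ i, 0 ≤ ℓ i) : Hmono r ℓ = ⊤ := by
  rw [eq_top_iff]
  intro a _
  rw [mem_Hmono]
  exact Finset.sum_nonneg fun i _ => mul_nonneg (Int.natCast_nonneg _) (h i)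

lemma not_top {r : ℕ} {ℓ : Fin r → ℤ} {j : Fin r} (hj : ℓ j < 0) : Hmono r ℓ ≠ ⊤ := by
  intro h
  have hm : (Pi.single j 1 : Fin r → ℕ) ∈ Hmono r ℓ := h ▸ AddSubmonoid.mem_top _
  rw [mem_Hmono, sum_single] at hm
  omega

lemma gen_of_top {r : ℕ} {ℓ : Fin r → ℤ} (h : Hmono r ℓ = ⊤) :
    ∃ S : Finset (Fin r → ℕ), S.card = r ∧
      AddSubmonoid.closure (S : Set (Fin r → ℕ)) = Hmono r ℓ := by
  classical
  refine ⟨Finset.image (fun i => (Pi.single i 1 : Fin r → ℕ)) Finset.univ, ?_, ?_⟩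
  · rw [Finset.card_image_of_injective, Finset.card_univ, Fintype.card_fin]
    intro p q hpq
    by_contra hne
    have h1 := congrFun hpq p
    simp only [Pi.single_eq_same, Pi.single_eq_of_ne hne] at h1
    exact one_ne_zero h1
  · rw [h, eq_top_iff]
    intro a _
    have ha : a = ∑ i, (a i) • (Pi.single i 1 : Fin r → ℕ) := by
      funext k
      rw [Finset.sum_apply]
      simp [Pi.single_apply]
    rw [ha]
    apply AddSubmonoid.sum_mem
    intro i _
    apply AddSubmonoid.nsmul_mem
    apply AddSubmonoid.subset_closure
    simp only [Finset.coe_image, Set.mem_image, Finset.mem_coe]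
    exact ⟨i, Finset.mem_univ i, rfl⟩

lemma L_of_top {r : ℕ} {ℓ : Fin r → ℤ} (h : Hmono r ℓ = ⊤) (t : ℕ) :
    Nfun r t ≤ Lfun r ℓ t := by
  classical
  have hset : {S : Finset (Fin r) | S.card = t ∧ ∃ a ∈ Hmono r ℓ, ∀ i, i ∈ S ↔ a i ≠ 0}
      = ((Finset.powersetCard t (Finset.univ : Finset (Fin r)) : Finset (Finset (Fin r))) : Set (Finset (Fin r))) := by
    ext S
    simp only [Set.mem_setOf_eq, Finset.mem_coe, Finset.mem_powersetCard]
    constructor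
    · rintro ⟨hcard, _⟩; exact ⟨Finset.subset_univ _, hcard⟩
    · rintro ⟨_, hcard⟩
      refine ⟨hcard, (fun i => if i ∈ S then 1 else 0), ?_, ?_⟩
      · rw [h]; exact AddSubmonoid.mem_top _
      · intro i; by_cases hi : i ∈ S <;> simp [hi]
  rw [Lfun, hset, Set.ncard_coe_finset, Finset.card_powersetCard,
    Finset.card_univ, Fintype.card_fin]
  exact min_le_right _ _

end Stmt8Aux

/-- Artin's conjecture at `s₀` holds iff the toric ideal is zero (i.e. `H(ℓ)` is generated by
`r` elements) and `L_t ≥ N_t` for every (equivalently, some) `1 ≤ t ≤ r-1`. -/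
theorem stmt8 (r : ℕ) (hr : 2 ≤ r) (ℓ : Fin r → ℤ)
    (hpos : (∃ j, ℓ j < 0) → ∃ i, 0 < ℓ i) :
    ((Hmono r ℓ = ⊤) ↔
      ((∃ S : Finset (Fin r → ℕ), S.card = r ∧
          AddSubmonoid.closure (S : Set (Fin r → ℕ)) = Hmono r ℓ) ∧
        ∀ t, 1 ≤ t → t ≤ r - 1 → Nfun r t ≤ Lfun r ℓ t)) ∧
    ((Hmono r ℓ = ⊤) ↔
      ((∃ S : Finset (Fin r → ℕ), S.card = r ∧
          AddSubmonoid.closure (S : Set (Fin r → ℕ)) = Hmono r ℓ) ∧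
        ∃ t, 1 ≤ t ∧ t ≤ r - 1 ∧ Nfun r t ≤ Lfun r ℓ t)) := by
  classical
  by_cases hneg : ∃ j, ℓ j < 0
  · obtain ⟨j0, hj0⟩ := hneg
    obtain ⟨i1, hi1⟩ := hpos ⟨j0, hj0⟩
    have hT := Stmt8Aux.not_top hj0
    have hkey : ¬ ((∃ S : Finset (Fin r → ℕ), S.card = r ∧
          AddSubmonoid.closure (S : Set (Fin r → ℕ)) = Hmono r ℓ) ∧
        ∃ t, 1 ≤ t ∧ t ≤ r - 1 ∧ Nfun r t ≤ Lfun r ℓ t) := by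
      rintro ⟨⟨S, hcard, hclos⟩, t, ht1, ht2, hle⟩
      by_cases h2 : ∃ i2, i2 ≠ i1 ∧ 0 < ℓ i2
      · obtain ⟨i2, hne, hi2⟩ := h2
        exact Stmt8Aux.no_gen hi1 hi2 (Ne.symm hne) hj0 hcard hclos
      · push_neg at h2
        have huniq : ∀ i, 0 < ℓ i → i = i1 := by
          intro i hi
          by_contra hne
          have := h2 i hne
          omega
        exact absurd hle (not_le.2 (Stmt8Aux.L_lt hi1 hj0 huniq ht1 ht2))
    constructor
    · constructor
      · intro h; exact absurd h hT
      · rintro ⟨hg, hall⟩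
        exact absurd ⟨hg, 1, le_rfl, by omega, hall 1 le_rfl (by omega)⟩ hkey
    · constructor
      · intro h; exact absurd h hT
      · intro hc; exact absurd hc hkey
  · push_neg at hneg
    have hT := Stmt8Aux.top_of_nonneg hneg
    have hgen := Stmt8Aux.gen_of_top hT
    constructor
    · exact ⟨fun _ => ⟨hgen, fun t _ _ => Stmt8Aux.L_of_top hT t⟩, fun _ => hT⟩
    · exact ⟨fun _ => ⟨hgen, 1, le_rfl, by omega, Stmt8Aux.L_of_top hT 1⟩, fun _ => hT⟩
end

section
/- Assume r ≥ 2 and the positivity hypothesis. Then H(ℓ) = (Fin r → ℕ) if and only if H(ℓ) can be generated by r elements as an additive monoid and there exists t with 1 ≤ t ≤ r−1 such that every subset M ⊆ Fin r with |M| = t arises as M = supp(a) for some a ∈ H(ℓ). -/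
namespace Stmt11Aux

variable {r : ℕ} {ℓ : Fin r → ℤ}

lemma mem_Hmono {a : Fin r → ℕ} : a ∈ Hmono r ℓ ↔ 0 ≤ ∑ i, (a i : ℤ) * ℓ i := Iff.rfl

lemma sum_eq_pair {i j : Fin r} (hij : i ≠ j) (f : Fin r → ℕ)
    (hf : ∀ k, k ≠ i → k ≠ j → f k = 0) :
    ∑ k, (f k : ℤ) * ℓ k = (f i : ℤ) * ℓ i + (f j : ℤ) * ℓ j := by
  rw [← Finset.sum_pair (f := fun k => (f k : ℤ) * ℓ k) hij]
  refine (Finset.sum_subset (Finset.subset_univ _) (fun k _ hk => ?_)).symm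
  have h1 : k ≠ i := fun h => hk (by simp [h])
  have h2 : k ≠ j := fun h => hk (by simp [h])
  simp [hf k h1 h2]

lemma sum_eq_single' {i : Fin r} (f : Fin r → ℕ)
    (hf : ∀ k, k ≠ i → f k = 0) :
    ∑ k, (f k : ℤ) * ℓ k = (f i : ℤ) * ℓ i := by
  refine Finset.sum_eq_single_of_mem i (Finset.mem_univ _) (fun k _ hk => ?_)
  simp [hf k hk]

lemma closure_decomp (S : Finset (Fin r → ℕ))
    (hS : AddSubmonoid.closure (S : Set (Fin r → ℕ)) = Hmono r ℓ)
    (x : Fin r → ℕ) (hx' : x ∈ AddSubmonoid.closure (S : Set (Fin r → ℕ))) :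
    x = 0 ∨ x ∈ S ∨ ∃ b c : Fin r → ℕ, b ∈ Hmono r ℓ ∧ c ∈ Hmono r ℓ ∧
      b ≠ 0 ∧ c ≠ 0 ∧ x = b + c := by
  induction hx' using AddSubmonoid.closure_induction with
  | mem y hy => exact Or.inr (Or.inl hy)
  | zero => exact Or.inl rfl
  | add y z hy hz ihy ihz =>
    by_cases hy0 : y = 0
    · rw [hy0, zero_add]; exact ihz
    by_cases hz0 : z = 0
    · rw [hz0, add_zero]; exact ihy
    exact Or.inr (Or.inr ⟨y, z, hS ▸ hy, hS ▸ hz, hy0, hz0, rfl⟩)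

lemma mem_S_of_atom (S : Finset (Fin r → ℕ))
    (hS : AddSubmonoid.closure (S : Set (Fin r → ℕ)) = Hmono r ℓ)
    (x : Fin r → ℕ) (hx : x ∈ Hmono r ℓ) (hx0 : x ≠ 0)
    (hatom : ∀ b c : Fin r → ℕ, b ∈ Hmono r ℓ → c ∈ Hmono r ℓ → x = b + c →
      b = 0 ∨ c = 0) : x ∈ S := by
  have hx' : x ∈ AddSubmonoid.closure (S : Set (Fin r → ℕ)) := by rw [hS]; exact hx
  rcases closure_decomp S hS x hx' with h | h | ⟨b, c, hb, hc, hb0, hc0, heq⟩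
  · exact absurd h hx0
  · exact h
  · rcases hatom b c hb hc heq with h | h
    · exact absurd h hb0
    · exact absurd h hc0

lemma single_one_ne_zero (k : Fin r) : (Pi.single k 1 : Fin r → ℕ) ≠ 0 := by
  intro h
  have := congrFun h k
  simp at this

lemma single_mem_S (S : Finset (Fin r → ℕ))
    (hS : AddSubmonoid.closure (S : Set (Fin r → ℕ)) = Hmono r ℓ)
    (k : Fin r) (hk : 0 ≤ ℓ k) : (Pi.single k 1 : Fin r → ℕ) ∈ S := by
  refine mem_S_of_atom S hS _ ?_ (single_one_ne_zero k) ?_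
  · rw [mem_Hmono, sum_eq_single' (i := k) _ (fun k' hk' => Pi.single_eq_of_ne hk' 1)]
    simp [hk]
  · intro b c _ _ heq
    have hpt : ∀ m, b m + c m = (Pi.single k 1 : Fin r → ℕ) m := fun m =>
      (congrFun heq m).symm
    have hk' := hpt k
    rw [Pi.single_eq_same] at hk'
    have hz : ∀ m, m ≠ k → b m = 0 ∧ c m = 0 := by
      intro m hm
      have := hpt m
      rw [Pi.single_eq_of_ne hm] at this
      omega
    rcases Nat.add_eq_one_iff.mp hk' with ⟨h1, h2⟩ | ⟨h1, h2⟩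
    · left; funext m
      by_cases hm : m = k
      · rw [hm]; exact h1
      · exact (hz m hm).1
    · right; funext m
      by_cases hm : m = k
      · rw [hm]; exact h2
      · exact (hz m hm).2

/-- The atom supported on `{i,j}` for `ℓ i > 0 > ℓ j`. -/
def atomIJ (ℓ : Fin r → ℤ) (i j : Fin r) : Fin r → ℕ :=
  Pi.single i ((ℓ j).natAbs / Int.gcd (ℓ i) (ℓ j)) +
    Pi.single j ((ℓ i).natAbs / Int.gcd (ℓ i) (ℓ j))

section AtomIJ

set_option linter.unusedSectionVars false

variable {i j : Fin r} (hi : 0 < ℓ i) (hj : ℓ j < 0)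

lemma gcd_dvd_natAbs_left' (a b : ℤ) : Int.gcd a b ∣ a.natAbs := Nat.gcd_dvd_left _ _
lemma gcd_dvd_natAbs_right' (a b : ℤ) : Int.gcd a b ∣ b.natAbs := Nat.gcd_dvd_right _ _

include hi hj

lemma ne_ij : i ≠ j := by rintro rfl; omega

lemma gcd_pos : 0 < Int.gcd (ℓ i) (ℓ j) := by
  rw [Int.gcd_pos_iff]; left; omega

lemma atomIJ_apply_i : atomIJ ℓ i j i = (ℓ j).natAbs / Int.gcd (ℓ i) (ℓ j) := by
  have h := ne_ij hi hj
  simp [atomIJ, Pi.single_eq_of_ne h, Pi.single_eq_of_ne h.symm]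

lemma atomIJ_apply_j : atomIJ ℓ i j j = (ℓ i).natAbs / Int.gcd (ℓ i) (ℓ j) := by
  have h := ne_ij hi hj
  simp [atomIJ, Pi.single_eq_of_ne h, Pi.single_eq_of_ne h.symm]

lemma atomIJ_apply_other {k : Fin r} (hki : k ≠ i) (hkj : k ≠ j) :
    atomIJ ℓ i j k = 0 := by
  simp [atomIJ, Pi.single_eq_of_ne hki, Pi.single_eq_of_ne hkj]

lemma atomIJ_apply_i_pos : 0 < atomIJ ℓ i j i := by
  rw [atomIJ_apply_i hi hj]
  exact Nat.div_pos (Nat.le_of_dvd (by omega) (gcd_dvd_natAbs_right' _ _)) (gcd_pos hi hj)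

lemma atomIJ_apply_j_pos : 0 < atomIJ ℓ i j j := by
  rw [atomIJ_apply_j hi hj]
  exact Nat.div_pos (Nat.le_of_dvd (by omega) (gcd_dvd_natAbs_left' _ _)) (gcd_pos hi hj)

lemma atomIJ_ne_zero : atomIJ ℓ i j ≠ 0 := by
  intro h
  have := congrFun h i
  have := atomIJ_apply_i_pos hi hj
  simp_all

lemma key_identity :
    (((ℓ j).natAbs / Int.gcd (ℓ i) (ℓ j) : ℕ) : ℤ) * ℓ i +
      (((ℓ i).natAbs / Int.gcd (ℓ i) (ℓ j) : ℕ) : ℤ) * ℓ j = 0 := by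
  set g := Int.gcd (ℓ i) (ℓ j) with hg
  have hgi : g ∣ (ℓ i).natAbs := gcd_dvd_natAbs_left' _ _
  have hgj : g ∣ (ℓ j).natAbs := gcd_dvd_natAbs_right' _ _
  have hN : (ℓ j).natAbs / g * (ℓ i).natAbs = (ℓ i).natAbs / g * (ℓ j).natAbs := by
    conv_lhs => rw [← Nat.div_mul_cancel hgi]
    conv_rhs => rw [← Nat.div_mul_cancel hgj]
    ring
  have hin : (ℓ i) = ((ℓ i).natAbs : ℤ) := by omega
  have hjn : (ℓ j) = -((ℓ j).natAbs : ℤ) := by omega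
  have h2 : (((ℓ j).natAbs / g : ℕ) : ℤ) * ((ℓ i).natAbs : ℤ)
      = (((ℓ i).natAbs / g : ℕ) : ℤ) * ((ℓ j).natAbs : ℤ) := by exact_mod_cast hN
  linear_combination (((ℓ j).natAbs / g : ℕ) : ℤ) * hin +
    (((ℓ i).natAbs / g : ℕ) : ℤ) * hjn + h2

lemma atomIJ_mem : atomIJ ℓ i j ∈ Hmono r ℓ := by
  rw [mem_Hmono, sum_eq_pair (ne_ij hi hj) _
    (fun k hki hkj => atomIJ_apply_other hi hj hki hkj),
    atomIJ_apply_i hi hj, atomIJ_apply_j hi hj, key_identity hi hj]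

lemma atomIJ_atom (b c : Fin r → ℕ) (hb : b ∈ Hmono r ℓ) (hc : c ∈ Hmono r ℓ)
    (heq : atomIJ ℓ i j = b + c) : b = 0 ∨ c = 0 := by
  have hij := ne_ij hi hj
  set g := Int.gcd (ℓ i) (ℓ j) with hgdef
  have hgpos := gcd_pos hi hj
  have hgi : g ∣ (ℓ i).natAbs := gcd_dvd_natAbs_left' _ _
  have hgj : g ∣ (ℓ j).natAbs := gcd_dvd_natAbs_right' _ _
  have hinpos : 0 < (ℓ i).natAbs := by omega
  have hjnpos : 0 < (ℓ j).natAbs := by omega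
  have hpt : ∀ m, b m + c m = atomIJ ℓ i j m := fun m => (congrFun heq m).symm
  have hz : ∀ m, m ≠ i → m ≠ j → b m = 0 ∧ c m = 0 := by
    intro m hmi hmj
    have := hpt m
    rw [atomIJ_apply_other hi hj hmi hmj] at this
    omega
  -- both b and c satisfy the exact balance equation
  have hsum : ((b i : ℤ) * ℓ i + (b j : ℤ) * ℓ j) +
      ((c i : ℤ) * ℓ i + (c j : ℤ) * ℓ j) = 0 := by
    have h1 := hpt i; have h2 := hpt j
    rw [atomIJ_apply_i hi hj] at h1
    rw [atomIJ_apply_j hi hj] at h2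
    have := key_identity hi hj
    rw [← hgdef] at this
    have e1 : ((b i : ℤ) + c i) = (((ℓ j).natAbs / g : ℕ) : ℤ) := by exact_mod_cast h1
    have e2 : ((b j : ℤ) + c j) = (((ℓ i).natAbs / g : ℕ) : ℤ) := by exact_mod_cast h2
    calc ((b i : ℤ) * ℓ i + (b j : ℤ) * ℓ j) + ((c i : ℤ) * ℓ i + (c j : ℤ) * ℓ j)
        = ((b i : ℤ) + c i) * ℓ i + ((b j : ℤ) + c j) * ℓ j := by ring
      _ = (((ℓ j).natAbs / g : ℕ) : ℤ) * ℓ i + (((ℓ i).natAbs / g : ℕ) : ℤ) * ℓ j := by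
          rw [e1, e2]
      _ = 0 := this
  have hbsum : 0 ≤ (b i : ℤ) * ℓ i + (b j : ℤ) * ℓ j := by
    have := mem_Hmono.mp hb
    rwa [sum_eq_pair hij b (fun k hki hkj => (hz k hki hkj).1)] at this
  have hcsum : 0 ≤ (c i : ℤ) * ℓ i + (c j : ℤ) * ℓ j := by
    have := mem_Hmono.mp hc
    rwa [sum_eq_pair hij c (fun k hki hkj => (hz k hki hkj).2)] at this
  have hbeq : (b i : ℤ) * ℓ i + (b j : ℤ) * ℓ j = 0 := by linarith
  have hceq : (c i : ℤ) * ℓ i + (c j : ℤ) * ℓ j = 0 := by linarith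
  have hin : (ℓ i) = ((ℓ i).natAbs : ℤ) := by omega
  have hjn : (ℓ j) = -((ℓ j).natAbs : ℤ) := by omega
  have hbN : b i * (ℓ i).natAbs = b j * (ℓ j).natAbs := by
    rw [hin, hjn] at hbeq
    have : (b i : ℤ) * (ℓ i).natAbs = (b j : ℤ) * (ℓ j).natAbs := by linarith
    exact_mod_cast this
  have hcN : c i * (ℓ i).natAbs = c j * (ℓ j).natAbs := by
    rw [hin, hjn] at hceq
    have : (c i : ℤ) * (ℓ i).natAbs = (c j : ℤ) * (ℓ j).natAbs := by linarith
    exact_mod_cast this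
  have zero_of_i : ∀ d : Fin r → ℕ, d i * (ℓ i).natAbs = d j * (ℓ j).natAbs →
      (∀ m, m ≠ i → m ≠ j → d m = 0) → d i = 0 → d = 0 := by
    intro d hd hdz hdi
    have hdj : d j = 0 := by
      rw [hdi, zero_mul] at hd
      exact Nat.mul_eq_zero.mp hd.symm |>.resolve_right (by omega)
    funext m
    by_cases hmi : m = i
    · rw [hmi]; exact hdi
    by_cases hmj : m = j
    · rw [hmj]; exact hdj
    · exact hdz m hmi hmj
  by_cases hbi : b i = 0
  · exact Or.inl (zero_of_i b hbN (fun m h1 h2 => (hz m h1 h2).1) hbi)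
  · -- show c i = 0, hence c = 0
    right
    have hco : ((ℓ i).natAbs / g).Coprime ((ℓ j).natAbs / g) := by
      have : 0 < ((ℓ i).natAbs).gcd ((ℓ j).natAbs) := hgpos
      exact Nat.coprime_div_gcd_div_gcd this
    -- divide the relation by g
    have hbN' : b i * ((ℓ i).natAbs / g) = b j * ((ℓ j).natAbs / g) := by
      apply Nat.eq_of_mul_eq_mul_right hgpos
      calc b i * ((ℓ i).natAbs / g) * g = b i * ((ℓ i).natAbs / g * g) := by ring
        _ = b i * (ℓ i).natAbs := by rw [Nat.div_mul_cancel hgi]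
        _ = b j * (ℓ j).natAbs := hbN
        _ = b j * ((ℓ j).natAbs / g * g) := by rw [Nat.div_mul_cancel hgj]
        _ = b j * ((ℓ j).natAbs / g) * g := by ring
    have hdvd : (ℓ j).natAbs / g ∣ b i := by
      have h1 : (ℓ j).natAbs / g ∣ b i * ((ℓ i).natAbs / g) :=
        ⟨b j, by rw [hbN']; ring⟩
      exact (Nat.Coprime.dvd_of_dvd_mul_right (hco.symm) h1)
    have hle : b i ≤ (ℓ j).natAbs / g := by
      have := hpt i
      rw [atomIJ_apply_i hi hj, ← hgdef] at this
      omega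
    have hge : (ℓ j).natAbs / g ≤ b i := Nat.le_of_dvd (Nat.pos_of_ne_zero hbi) hdvd
    have hci : c i = 0 := by
      have := hpt i
      rw [atomIJ_apply_i hi hj, ← hgdef] at this
      omega
    exact zero_of_i c hcN (fun m h1 h2 => (hz m h1 h2).2) hci

lemma atomIJ_mem_S (S : Finset (Fin r → ℕ))
    (hS : AddSubmonoid.closure (S : Set (Fin r → ℕ)) = Hmono r ℓ) :
    atomIJ ℓ i j ∈ S :=
  mem_S_of_atom S hS _ (atomIJ_mem hi hj) (atomIJ_ne_zero hi hj)
    (atomIJ_atom hi hj)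

end AtomIJ

end Stmt11Aux
open Stmt11Aux in
/-- Artin's conjecture at `s₀` holds iff the toric ideal is zero and there is `1 ≤ t ≤ r-1`
such that every `t`-element subset of `Fin r` is the support of some element of `H(ℓ)`. -/
theorem stmt11 (r : ℕ) (hr : 2 ≤ r) (ℓ : Fin r → ℤ)
    (hpos : (∃ j, ℓ j < 0) → ∃ i, 0 < ℓ i) :
    (Hmono r ℓ = ⊤) ↔
      ((∃ S : Finset (Fin r → ℕ), S.card = r ∧
          AddSubmonoid.closure (S : Set (Fin r → ℕ)) = Hmono r ℓ) ∧
        ∃ t, 1 ≤ t ∧ t ≤ r - 1 ∧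
          ∀ M : Finset (Fin r), M.card = t → ∃ a ∈ Hmono r ℓ, ∀ i, i ∈ M ↔ a i ≠ 0) := by
  classical
  constructor
  · intro htop
    have hinj : Function.Injective (fun i : Fin r => (Pi.single i 1 : Fin r → ℕ)) := by
      intro a b hab
      by_contra hne
      have h := congrFun hab a
      simp only at h
      rw [Pi.single_eq_same, Pi.single_eq_of_ne hne] at h
      exact one_ne_zero h
    refine ⟨⟨Finset.univ.image (fun i : Fin r => (Pi.single i 1 : Fin r → ℕ)), ?_, ?_⟩,
      1, le_refl 1, by omega, ?_⟩
    · rw [Finset.card_image_of_injective _ hinj, Finset.card_univ, Fintype.card_fin]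
    · rw [htop, eq_top_iff]
      intro a _
      have ha : a = ∑ i, Pi.single i (a i) := (Finset.univ_sum_single a).symm
      rw [ha]
      refine AddSubmonoid.sum_mem _ (fun i _ => ?_)
      have h1 : Pi.single i (a i) = a i • (Pi.single i 1 : Fin r → ℕ) := by
        funext k
        by_cases hk : k = i
        · subst hk
          rw [Pi.single_eq_same, Pi.smul_apply, Pi.single_eq_same, smul_eq_mul, mul_one]
        · rw [Pi.single_eq_of_ne hk, Pi.smul_apply, Pi.single_eq_of_ne hk, smul_eq_mul,
            mul_zero]
      rw [h1]
      have hmem : (Pi.single i 1 : Fin r → ℕ) ∈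
          AddSubmonoid.closure ((Finset.univ.image
            (fun i : Fin r => (Pi.single i 1 : Fin r → ℕ))) : Set (Fin r → ℕ)) :=
        AddSubmonoid.subset_closure
          (Finset.mem_coe.mpr (Finset.mem_image_of_mem _ (Finset.mem_univ i)))
      exact nsmul_mem hmem (a i)
    · intro M hM
      obtain ⟨i, rfl⟩ := Finset.card_eq_one.mp hM
      refine ⟨Pi.single i 1, by rw [htop]; trivial, fun i' => ?_⟩
      constructor
      · intro hi'
        rw [Finset.mem_singleton] at hi'
        subst hi'
        simp
      · intro hi'
        rw [Finset.mem_singleton]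
        by_contra hne
        exact hi' (Pi.single_eq_of_ne hne 1)
  · rintro ⟨⟨S, hScard, hSgen⟩, t, ht1, ht2, hsupp⟩
    by_contra hne
    have hexj : ∃ j, ℓ j < 0 := by
      by_contra h
      push_neg at h
      apply hne
      rw [eq_top_iff]
      intro a _
      rw [mem_Hmono]
      exact Finset.sum_nonneg fun k _ => mul_nonneg (Int.natCast_nonneg _) (h k)
    obtain ⟨j, hj⟩ := hexj
    obtain ⟨i0, hi0⟩ := hpos ⟨j, hj⟩
    by_cases hp2 : ∃ i', 0 < ℓ i' ∧ i' ≠ i0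
    · -- at least two positive entries : S must contain more than r atoms
      obtain ⟨i1, hi1, hne10⟩ := hp2
      set Nset := Finset.univ.filter (fun k => ℓ k < 0) with hNset
      set Zset := Finset.univ.filter (fun k => 0 ≤ ℓ k) with hZset
      have hmemN : ∀ k, k ∈ Nset ↔ ℓ k < 0 := by
        intro k; simp [hNset]
      have hmemZ : ∀ k, k ∈ Zset ↔ 0 ≤ ℓ k := by
        intro k; simp [hZset]
      have hcards : Zset.card + Nset.card = r := by
        have := Finset.card_filter_add_card_filter_not
          (s := (Finset.univ : Finset (Fin r))) (p := fun k => 0 ≤ ℓ k)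
        simp only [not_le] at this
        rwa [Finset.card_univ, Fintype.card_fin] at this
      have hn1 : 1 ≤ Nset.card := Finset.card_pos.mpr ⟨j, (hmemN j).mpr hj⟩
      set T1 := Zset.image (fun k => (Pi.single k 1 : Fin r → ℕ)) with hT1
      set T2 := Nset.image (atomIJ ℓ i0) with hT2
      set T3 := Nset.image (atomIJ ℓ i1) with hT3
      have hT1S : T1 ⊆ S := by
        intro x hx
        simp only [hT1, Finset.mem_image] at hx
        obtain ⟨k, hk, rfl⟩ := hx
        exact single_mem_S S hSgen k ((hmemZ k).mp hk)
      have hT2S : T2 ⊆ S := by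
        intro x hx
        simp only [hT2, Finset.mem_image] at hx
        obtain ⟨k, hk, rfl⟩ := hx
        exact atomIJ_mem_S hi0 ((hmemN k).mp hk) S hSgen
      have hT3S : T3 ⊆ S := by
        intro x hx
        simp only [hT3, Finset.mem_image] at hx
        obtain ⟨k, hk, rfl⟩ := hx
        exact atomIJ_mem_S hi1 ((hmemN k).mp hk) S hSgen
      have hc1 : T1.card = Zset.card := by
        refine Finset.card_image_of_injOn (fun k _ k' _ heq => ?_)
        by_contra hkk
        have h := congrFun heq k
        rw [Pi.single_eq_same, Pi.single_eq_of_ne hkk] at h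
        exact one_ne_zero h
      have hinj2 : ∀ (i : Fin r), 0 < ℓ i → Set.InjOn (atomIJ ℓ i) Nset := by
        intro i hi k hk k' hk' heq
        rw [Finset.mem_coe, hmemN] at hk hk'
        by_contra hkk
        have := congrFun heq k
        rw [atomIJ_apply_other hi hk' (fun h => by rw [h] at hk; omega) hkk] at this
        have := atomIJ_apply_j_pos hi hk
        omega
      have hc2 : T2.card = Nset.card := Finset.card_image_of_injOn (hinj2 i0 hi0)
      have hc3 : T3.card = Nset.card := Finset.card_image_of_injOn (hinj2 i1 hi1)
      -- a single evaluated anywhere except its index is 0; atoms are positive at both indices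
      have hsingle_ne_atom : ∀ (k : Fin r) (i m : Fin r), 0 < ℓ i → ℓ m < 0 →
          (Pi.single k 1 : Fin r → ℕ) ≠ atomIJ ℓ i m := by
        intro k i m hi hm heq
        have him : i ≠ m := ne_ij hi hm
        have h1 : (Pi.single k 1 : Fin r → ℕ) i ≠ 0 := by
          rw [heq]; exact (atomIJ_apply_i_pos hi hm).ne'
        have h2 : (Pi.single k 1 : Fin r → ℕ) m ≠ 0 := by
          rw [heq]; exact (atomIJ_apply_j_pos hi hm).ne'
        have hik : i = k := by
          by_contra h; exact h1 (Pi.single_eq_of_ne h 1)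
        have hmk : m = k := by
          by_contra h; exact h2 (Pi.single_eq_of_ne h 1)
        exact him (hik.trans hmk.symm)
      have hd12 : Disjoint T1 T2 := by
        rw [Finset.disjoint_left]
        intro x hx1 hx2
        simp only [hT1, hT2, Finset.mem_image] at hx1 hx2
        obtain ⟨k, _, rfl⟩ := hx1
        obtain ⟨m, hm, heq⟩ := hx2
        exact hsingle_ne_atom k i0 m hi0 ((hmemN m).mp hm) heq.symm
      have hd3 : Disjoint (T1 ∪ T2) T3 := by
        rw [Finset.disjoint_left]
        intro x hx hx3
        simp only [hT3, Finset.mem_image] at hx3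
        obtain ⟨m, hm, rfl⟩ := hx3
        have hm' := (hmemN m).mp hm
        rcases Finset.mem_union.mp hx with hx1 | hx2
        · simp only [hT1, Finset.mem_image] at hx1
          obtain ⟨k, _, heq⟩ := hx1
          exact hsingle_ne_atom k i1 m hi1 hm' heq
        · simp only [hT2, Finset.mem_image] at hx2
          obtain ⟨m', hm2, heq⟩ := hx2
          have hm2' := (hmemN m').mp hm2
          -- atomIJ ℓ i0 m' = atomIJ ℓ i1 m, evaluate at i0
          have h1 := atomIJ_apply_i_pos hi0 hm2'
          have h2 : atomIJ ℓ i1 m i0 = 0 :=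
            atomIJ_apply_other hi1 hm' (Ne.symm hne10) (fun h => by rw [h] at hi0; omega)
          rw [heq, h2] at h1
          omega
      have hTS : T1 ∪ T2 ∪ T3 ⊆ S := by
        intro x hx
        rcases Finset.mem_union.mp hx with hx | hx
        · rcases Finset.mem_union.mp hx with hx | hx
          · exact hT1S hx
          · exact hT2S hx
        · exact hT3S hx
      have hcardT : (T1 ∪ T2 ∪ T3).card = Zset.card + Nset.card + Nset.card := by
        rw [Finset.card_union_of_disjoint hd3, Finset.card_union_of_disjoint hd12,
          hc1, hc2, hc3]
      have := Finset.card_le_card hTS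
      rw [hcardT, hScard] at this
      omega
    · -- only one positive entry i0 : find a support avoiding i0 but containing j
      push_neg at hp2
      have hneg : ∀ k, k ≠ i0 → ℓ k ≤ 0 := fun k hk =>
        le_of_not_gt (fun h => hk (hp2 k h))
      have hji0 : j ≠ i0 := by intro h; rw [h] at hj; omega
      have hsub0 : ({j} : Finset (Fin r)) ⊆ Finset.univ.erase i0 := by
        rw [Finset.singleton_subset_iff, Finset.mem_erase]
        exact ⟨hji0, Finset.mem_univ _⟩
      have hcard_erase : (Finset.univ.erase i0).card = r - 1 := by
        rw [Finset.card_erase_of_mem (Finset.mem_univ _), Finset.card_univ, Fintype.card_fin]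
      obtain ⟨M, hjM, hMsub, hMcard⟩ : ∃ M, {j} ⊆ M ∧ M ⊆ Finset.univ.erase i0 ∧
          M.card = t - 1 + ({j} : Finset (Fin r)).card :=
        Finset.exists_subsuperset_card_eq hsub0 (by rw [Finset.card_singleton]; omega)
          (by rw [Finset.card_singleton, hcard_erase]; omega)
      have hMcard' : M.card = t := by
        rw [Finset.card_singleton] at hMcard; omega
      obtain ⟨a, haH, haM⟩ := hsupp M hMcard'
      have hlt : ∑ k, (a k : ℤ) * ℓ k < 0 := by
        have hterm : ∀ k ∈ Finset.univ, (a k : ℤ) * ℓ k ≤ (fun _ : Fin r => (0:ℤ)) k := by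
          intro k _
          by_cases hak : a k = 0
          · simp [hak]
          · have hkM : k ∈ M := (haM k).mpr hak
            have hki0 : k ≠ i0 := (Finset.mem_erase.mp (hMsub hkM)).1
            exact mul_nonpos_iff.mpr (Or.inl ⟨Int.natCast_nonneg _, hneg k hki0⟩)
        have hstrict : ∃ k ∈ Finset.univ, (a k : ℤ) * ℓ k < (fun _ : Fin r => (0:ℤ)) k := by
          refine ⟨j, Finset.mem_univ _, ?_⟩
          have haj : a j ≠ 0 := (haM j).mp (hjM (Finset.mem_singleton_self j))
          exact mul_neg_of_pos_of_neg
            (Int.natCast_pos.mpr (Nat.pos_of_ne_zero haj)) hj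
        calc ∑ k, (a k : ℤ) * ℓ k < ∑ _k : Fin r, (0:ℤ) := Finset.sum_lt_sum hterm hstrict
          _ = 0 := by simp
      rw [mem_Hmono] at haH
      omega
end

section
/- Assume r ≥ 2, the positivity hypothesis, and the simple-distinct-zeros hypothesis: there is at most one index i with ℓ_i > 0, and for such an index ℓ_i = 1. Then the following are equivalent: (1) H(ℓ) = (Fin r → ℕ); (2) there exists t with 1 ≤ t ≤ r−1 such that L_t(ℓ) ≥ N_t; (3) for every index i, Σ_{j ≠ i} ℓ_j ≥ 0; (4) for all indices j ≠ k there exists a ∈ H(ℓ) with a_j > 0 and a_k = 0; (5) there exists m with 1 ≤ m ≤ r−1 such that every subset M ⊆ Fin r with |M| = m arises as M = supp(a) for some a ∈ H(ℓ). -/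
/-- If zeros are simple and distinct (at most one `i` with `ℓ i > 0`, and then `ℓ i = 1`),
five formulations of Artin's conjecture at `s₀` are equivalent. -/
theorem stmt12 (r : ℕ) (hr : 2 ≤ r) (ℓ : Fin r → ℤ)
    (hpos : (∃ j, ℓ j < 0) → ∃ i, 0 < ℓ i)
    (huniq : ∀ i j, 0 < ℓ i → 0 < ℓ j → i = j)
    (hsimple : ∀ i, 0 < ℓ i → ℓ i = 1) :
    [ Hmono r ℓ = ⊤,
      ∃ t, 1 ≤ t ∧ t ≤ r - 1 ∧ Nfun r t ≤ Lfun r ℓ t,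
      ∀ i, 0 ≤ ∑ j ∈ Finset.univ.erase i, ℓ j,
      ∀ j k : Fin r, j ≠ k → ∃ a ∈ Hmono r ℓ, 0 < a j ∧ a k = 0,
      ∃ t, 1 ≤ t ∧ t ≤ r - 1 ∧
        ∀ M : Finset (Fin r), M.card = t → ∃ a ∈ Hmono r ℓ, ∀ i, i ∈ M ↔ a i ≠ 0 ].TFAE := by
  classical
  have hmem_iff : ∀ a : Fin r → ℕ, a ∈ Hmono r ℓ ↔ 0 ≤ ∑ i, (a i : ℤ) * ℓ i :=
    fun a => Iff.rfl
  by_cases hP : ∀ j, 0 ≤ ℓ j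
  · -- all statements hold
    have hmem : ∀ a : Fin r → ℕ, a ∈ Hmono r ℓ := fun a =>
      (hmem_iff a).2 <| Finset.sum_nonneg fun i _ =>
        mul_nonneg (Int.natCast_nonneg _) (hP i)
    have s1 : Hmono r ℓ = ⊤ := by
      ext a; simp [hmem a]
    have s3 : ∀ i, 0 ≤ ∑ j ∈ Finset.univ.erase i, ℓ j :=
      fun i => Finset.sum_nonneg fun j _ => hP j
    have s4 : ∀ j k : Fin r, j ≠ k → ∃ a ∈ Hmono r ℓ, 0 < a j ∧ a k = 0 := by
      intro j k hjk
      refine ⟨Pi.single j 1, hmem _, ?_, Pi.single_eq_of_ne (Ne.symm hjk) 1⟩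
      simp
    have s5 : ∃ t, 1 ≤ t ∧ t ≤ r - 1 ∧
        ∀ M : Finset (Fin r), M.card = t → ∃ a ∈ Hmono r ℓ, ∀ i, i ∈ M ↔ a i ≠ 0 := by
      refine ⟨1, le_rfl, by omega, fun M _ => ?_⟩
      refine ⟨fun i => if i ∈ M then 1 else 0, hmem _, fun i => ?_⟩
      by_cases h : i ∈ M <;> simp [h]
    have s2 : ∃ t, 1 ≤ t ∧ t ≤ r - 1 ∧ Nfun r t ≤ Lfun r ℓ t := by
      refine ⟨1, le_rfl, by omega, ?_⟩
      have hN : Nfun r 1 ≤ r := by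
        unfold Nfun
        exact le_trans (min_le_right _ _) (le_of_eq (Nat.choose_one_right r))
      refine le_trans hN ?_
      unfold Lfun
      have hinj : Function.Injective (fun j : Fin r => ({j} : Finset (Fin r))) :=
        fun a b h => Finset.singleton_injective h
      have hsub : Set.range (fun j : Fin r => ({j} : Finset (Fin r))) ⊆
          {S : Finset (Fin r) | S.card = 1 ∧ ∃ a ∈ Hmono r ℓ, ∀ i, i ∈ S ↔ a i ≠ 0} := by
        rintro S ⟨j, rfl⟩
        refine ⟨Finset.card_singleton j, Pi.single j 1, hmem _, fun i => ?_⟩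
        rcases eq_or_ne i j with rfl | h
        · simp
        · simp [h, Pi.single_eq_of_ne h]
      have hcard := Set.ncard_le_ncard hsub (Set.toFinite _)
      have hrange : (Set.range (fun j : Fin r => ({j} : Finset (Fin r)))).ncard = r := by
        have hco : Set.range (fun j : Fin r => ({j} : Finset (Fin r)))
            = ↑(Finset.univ.image (fun j : Fin r => ({j} : Finset (Fin r)))) := by
          ext S; simp
        rw [hco]
        rw [Set.ncard_coe_finset]
        rw [Finset.card_image_of_injective _ hinj]
        rw [Finset.card_univ, Fintype.card_fin]
      exact le_trans (le_of_eq hrange.symm) hcard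
    tfae_have 1 → 2 := fun _ => s2
    tfae_have 2 → 3 := fun _ => s3
    tfae_have 3 → 4 := fun _ => s4
    tfae_have 4 → 5 := fun _ => s5
    tfae_have 5 → 1 := fun _ => s1
    tfae_finish
  · -- some ℓ j < 0 : all statements fail
    push_neg at hP
    obtain ⟨j₀, hj₀⟩ := hP
    obtain ⟨i₀, hi₀⟩ := hpos ⟨j₀, hj₀⟩
    have hne : j₀ ≠ i₀ := by intro h; rw [h] at hj₀; omega
    have hle : ∀ i, i ≠ i₀ → ℓ i ≤ 0 := fun i h =>
      not_lt.1 fun hp => h (huniq i i₀ hp hi₀)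
    have key : ∀ a ∈ Hmono r ℓ, a i₀ = 0 → a j₀ = 0 := by
      intro a ha h0
      by_contra hj
      have h1 : ∑ i ∈ Finset.univ.erase j₀, (a i : ℤ) * ℓ i ≤ 0 :=
        Finset.sum_nonpos fun i _ => by
          rcases eq_or_ne i i₀ with rfl | h
          · simp [h0]
          · exact mul_nonpos_of_nonneg_of_nonpos (Int.natCast_nonneg _) (hle i h)
      have h2 : (a j₀ : ℤ) * ℓ j₀ < 0 :=
        mul_neg_of_pos_of_neg (by exact_mod_cast Nat.pos_of_ne_zero hj) hj₀
      have h3 : ∑ i, (a i : ℤ) * ℓ i =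
          (∑ i ∈ Finset.univ.erase j₀, (a i : ℤ) * ℓ i) + (a j₀ : ℤ) * ℓ j₀ :=
        (Finset.sum_erase_add _ _ (Finset.mem_univ _)).symm
      have := (hmem_iff a).1 ha
      omega
    have existsM : ∀ t, 1 ≤ t → t ≤ r - 1 →
        ∃ M : Finset (Fin r), M.card = t ∧ j₀ ∈ M ∧ i₀ ∉ M := by
      intro t ht1 ht2
      have hcard : t - 1 ≤ ((Finset.univ.erase i₀).erase j₀).card := by
        rw [Finset.card_erase_of_mem (Finset.mem_erase.2 ⟨hne, Finset.mem_univ _⟩),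
          Finset.card_erase_of_mem (Finset.mem_univ _), Finset.card_univ, Fintype.card_fin]
        omega
      obtain ⟨M', hsub, hcard'⟩ := Finset.exists_subset_card_eq hcard
      have hj₀M' : j₀ ∉ M' := fun h => (Finset.mem_erase.1 (hsub h)).1 rfl
      refine ⟨insert j₀ M', ?_, Finset.mem_insert_self _ _, ?_⟩
      · rw [Finset.card_insert_of_notMem hj₀M', hcard']; omega
      · intro h
        rcases Finset.mem_insert.1 h with h | h
        · exact hne h.symm
        · exact (Finset.mem_erase.1 (Finset.mem_erase.1 (hsub h)).2).1 rfl
    have n1 : ¬ Hmono r ℓ = ⊤ := by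
      intro h
      have hmem : (Pi.single j₀ 1 : Fin r → ℕ) ∈ Hmono r ℓ := by
        rw [h]; trivial
      have hs := (hmem_iff _).1 hmem
      have heq : ∑ i, ((Pi.single j₀ 1 : Fin r → ℕ) i : ℤ) * ℓ i = ℓ j₀ := by
        rw [Fintype.sum_eq_single j₀ (fun i hi => by simp [Pi.single_eq_of_ne hi])]
        simp
      omega
    have n3 : ¬ ∀ i, 0 ≤ ∑ j ∈ Finset.univ.erase i, ℓ j := by
      intro h3
      have h := h3 i₀
      have hlt : ∑ j ∈ Finset.univ.erase i₀, ℓ j < ∑ j ∈ Finset.univ.erase i₀, (0 : ℤ) :=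
        Finset.sum_lt_sum (fun i hi => hle i (Finset.ne_of_mem_erase hi))
          ⟨j₀, Finset.mem_erase.2 ⟨hne, Finset.mem_univ _⟩, hj₀⟩
      simp only [Finset.sum_const_zero] at hlt
      omega
    have n4 : ¬ ∀ j k : Fin r, j ≠ k → ∃ a ∈ Hmono r ℓ, 0 < a j ∧ a k = 0 := by
      intro h4
      obtain ⟨a, ha, haj, hak⟩ := h4 j₀ i₀ hne
      have := key a ha hak
      omega
    have n5 : ¬ ∃ t, 1 ≤ t ∧ t ≤ r - 1 ∧
        ∀ M : Finset (Fin r), M.card = t → ∃ a ∈ Hmono r ℓ, ∀ i, i ∈ M ↔ a i ≠ 0 := by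
      rintro ⟨t, ht1, ht2, hall⟩
      obtain ⟨M, hMc, hjM, hiM⟩ := existsM t ht1 ht2
      obtain ⟨a, ha, hsupp⟩ := hall M hMc
      have h0 : a i₀ = 0 := by
        by_contra hz; exact hiM ((hsupp i₀).2 hz)
      exact ((hsupp j₀).1 hjM) (key a ha h0)
    have n2 : ¬ ∃ t, 1 ≤ t ∧ t ≤ r - 1 ∧ Nfun r t ≤ Lfun r ℓ t := by
      rintro ⟨t, ht1, ht2, hN⟩
      set G : Finset (Finset (Fin r)) := Finset.univ.filter
        (fun S : Finset (Fin r) => S.card = t ∧ ∃ a ∈ Hmono r ℓ, ∀ i, i ∈ S ↔ a i ≠ 0) with hGdef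
      have hLG : Lfun r ℓ t = G.card := by
        unfold Lfun
        rw [← Set.ncard_coe_finset]
        congr 1
        ext S
        simp [hGdef]
      have hG : ∀ S ∈ G, S.card = t ∧ (i₀ ∈ S ∨ (i₀ ∉ S ∧ j₀ ∉ S)) := by
        intro S hS
        rw [hGdef, Finset.mem_filter] at hS
        obtain ⟨-, hc, a, ha, hsupp⟩ := hS
        refine ⟨hc, ?_⟩
        by_cases h : i₀ ∈ S
        · exact Or.inl h
        · refine Or.inr ⟨h, fun hj => ?_⟩
          have h0 : a i₀ = 0 := by by_contra hz; exact h ((hsupp i₀).2 hz)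
          exact ((hsupp j₀).1 hj) (key a ha h0)
      set F₁ : Finset (Finset (Fin r)) :=
        Finset.image (insert i₀) ((Finset.univ.erase i₀).powersetCard (t - 1)) with hF₁
      set F₂ : Finset (Finset (Fin r)) :=
        ((Finset.univ.erase i₀).erase j₀).powersetCard t with hF₂
      have hsub : G ⊆ F₁ ∪ F₂ := by
        intro S hS
        obtain ⟨hc, hcase⟩ := hG S hS
        rcases hcase with h | ⟨h1, h2⟩
        · apply Finset.mem_union_left
          refine Finset.mem_image.2 ⟨S.erase i₀, ?_, Finset.insert_erase h⟩
          rw [Finset.mem_powersetCard]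
          exact ⟨fun x hx => Finset.mem_erase.2 ⟨(Finset.mem_erase.1 hx).1, Finset.mem_univ _⟩,
            by rw [Finset.card_erase_of_mem h, hc]⟩
        · apply Finset.mem_union_right
          rw [Finset.mem_powersetCard]
          refine ⟨fun x hx => ?_, hc⟩
          rcases eq_or_ne x j₀ with rfl | hxj
          · exact absurd hx h2
          rcases eq_or_ne x i₀ with rfl | hxi
          · exact absurd hx h1
          exact Finset.mem_erase.2 ⟨hxj, Finset.mem_erase.2 ⟨hxi, Finset.mem_univ _⟩⟩
      have hbound : G.card ≤ Nat.choose (r - 1) (t - 1) + Nat.choose (r - 2) t := by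
        calc G.card ≤ (F₁ ∪ F₂).card := Finset.card_le_card hsub
          _ ≤ F₁.card + F₂.card := Finset.card_union_le _ _
          _ ≤ Nat.choose (r - 1) (t - 1) + Nat.choose (r - 2) t := by
              apply add_le_add
              · refine le_trans Finset.card_image_le ?_
                rw [Finset.card_powersetCard,
                  Finset.card_erase_of_mem (Finset.mem_univ _), Finset.card_univ,
                  Fintype.card_fin]
              · rw [hF₂, Finset.card_powersetCard,
                  Finset.card_erase_of_mem (Finset.mem_erase.2 ⟨hne, Finset.mem_univ _⟩),
                  Finset.card_erase_of_mem (Finset.mem_univ _), Finset.card_univ,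
                  Fintype.card_fin]
                have : r - 1 - 1 = r - 2 := by omega
                rw [this]
      have hsub2 : G ⊆ Finset.univ.powersetCard t := fun S hS =>
        Finset.mem_powersetCard.2 ⟨Finset.subset_univ _, (hG S hS).1⟩
      have hstrict : G.card < Nat.choose r t := by
        obtain ⟨M, hMc, hjM, hiM⟩ := existsM t ht1 ht2
        have hMnotG : M ∉ G := by
          intro hM
          obtain ⟨-, h⟩ := hG M hM
          rcases h with h | ⟨-, h⟩
          · exact hiM h
          · exact h hjM
        have hss : G ⊂ Finset.univ.powersetCard t :=
          (Finset.ssubset_iff_of_subset hsub2).2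
            ⟨M, Finset.mem_powersetCard.2 ⟨Finset.subset_univ _, hMc⟩, hMnotG⟩
        have := Finset.card_lt_card hss
        rwa [Finset.card_powersetCard, Finset.card_univ, Fintype.card_fin] at this
      have hlt : Lfun r ℓ t < Nfun r t := by
        rw [hLG, Nfun]
        exact lt_min (by omega) hstrict
      omega
    tfae_have 1 → 2 := fun h => (n1 h).elim
    tfae_have 2 → 3 := fun h => (n2 h).elim
    tfae_have 3 → 4 := fun h => (n3 h).elim
    tfae_have 4 → 5 := fun h => (n4 h).elim
    tfae_have 5 → 1 := fun h => (n5 h).elim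
    tfae_finish
end

section
/- Assume all poles are simple, i.e. ℓ_j ≥ −1 for every index j. Then H(ℓ) equals the additive submonoid of (Fin r → ℕ) generated by the set {e_j : ℓ_j = 0} ∪ {e_j + v : ℓ_j > 0, v ∈ (Fin r → ℕ), supp(v) ⊆ {k : ℓ_k = −1}, |v| ≤ ℓ_j}. -/

lemma exists_le_sum {r : ℕ} (b : Fin r → ℕ) :
    ∀ t : ℕ, t ≤ ∑ i, b i → ∃ v : Fin r → ℕ, (∀ i, v i ≤ b i) ∧ ∑ i, v i = t := by
  intro t
  induction t with
  | zero => exact fun _ => ⟨0, fun i => Nat.zero_le _, by simp⟩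
  | succ n ih =>
    intro ht
    obtain ⟨v, hv, hsum⟩ := ih (by omega)
    have hex : ∃ k, v k < b k := by
      by_contra h
      push_neg at h
      have := Finset.sum_le_sum (s := Finset.univ) (fun i _ => h i)
      omega
    obtain ⟨k, hk⟩ := hex
    refine ⟨v + Pi.single k 1, fun i => ?_, ?_⟩
    · rcases eq_or_ne i k with rfl | hik
      · simp only [Pi.add_apply, Pi.single_eq_same]
        omega
      · simp only [Pi.add_apply, Pi.single_apply, if_neg hik]
        have := hv i; omega
    · simp only [Pi.add_apply]
      rw [Finset.sum_add_distrib, hsum, Finset.sum_pi_single']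
      simp

lemma key {r : ℕ} (ℓ : Fin r → ℤ) (hsp : ∀ j, -1 ≤ ℓ j) :
    ∀ m : ℕ, ∀ a : Fin r → ℕ,
      (∑ k ∈ Finset.univ.filter (fun k => ℓ k = -1), a k) = m →
      0 ≤ ∑ i, (a i : ℤ) * ℓ i →
      a ∈ AddSubmonoid.closure
        ({u | ∃ j, ℓ j = 0 ∧ u = Pi.single j 1} ∪
         {u | ∃ j, ∃ v : Fin r → ℕ, 0 < ℓ j ∧ (∀ k, v k ≠ 0 → ℓ k = -1) ∧
            ((∑ i, v i : ℕ) : ℤ) ≤ ℓ j ∧ u = Pi.single j 1 + v}) := by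
  intro m
  induction m using Nat.strong_induction_on with
  | _ m ih =>
  intro a hm hsum
  rcases Nat.eq_zero_or_pos m with rfl | hmpos
  · -- no negative support: a is a sum of single generators
    have hzero : ∀ k, ℓ k = -1 → a k = 0 := by
      intro k hk
      exact Finset.sum_eq_zero_iff.mp hm k (by simp [hk])
    have ha : a = ∑ i, Pi.single i (a i) := (Finset.univ_sum_single a).symm
    rw [ha]
    apply AddSubmonoid.sum_mem
    intro i _
    rcases Nat.eq_zero_or_pos (a i) with h0 | h0
    · rw [h0, Pi.single_zero]
      exact AddSubmonoid.zero_mem _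
    · have hne : ℓ i ≠ -1 := fun hc => by have := hzero i hc; omega
      have hgen : (Pi.single i 1 : Fin r → ℕ) ∈
          ({u | ∃ j, ℓ j = 0 ∧ u = Pi.single j 1} ∪
           {u | ∃ j, ∃ v : Fin r → ℕ, 0 < ℓ j ∧ (∀ k, v k ≠ 0 → ℓ k = -1) ∧
              ((∑ i, v i : ℕ) : ℤ) ≤ ℓ j ∧ u = Pi.single j 1 + v}) := by
        rcases lt_or_eq_of_le (hsp i) with h | h
        · rcases lt_or_eq_of_le (by omega : (0:ℤ) ≤ ℓ i) with h' | h'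
          · refine Or.inr ⟨i, (0 : Fin r → ℕ), h', ?_, ?_, ?_⟩
            · intro k hk; simp at hk
            · simpa using le_of_lt h'
            · simp
          · exact Or.inl ⟨i, h'.symm, rfl⟩
        · exact absurd h.symm hne
      have heq : Pi.single i (a i) = a i • (Pi.single i 1 : Fin r → ℕ) := by
        funext k
        rcases eq_or_ne k i with rfl | hk
        · simp
        · simp [Pi.single_apply, hk]
      rw [heq]
      exact AddSubmonoid.nsmul_mem _ (AddSubmonoid.subset_closure hgen) (a i)
  · -- positive negative mass: find j with ℓ j > 0 and a j ≠ 0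
    have hex : ∃ j, 0 < ℓ j ∧ a j ≠ 0 := by
      by_contra h
      push_neg at h
      have hle : ∑ i, (a i : ℤ) * ℓ i ≤ ∑ i, (if ℓ i = -1 then -(a i : ℤ) else 0) := by
        apply Finset.sum_le_sum
        intro i _
        by_cases hi : ℓ i = -1
        · simp [hi]
        · rcases Nat.eq_zero_or_pos (a i) with h0 | h0
          · simp [h0, hi]
          · have h1 : ℓ i ≤ 0 := by
              by_contra hc; push_neg at hc; exact absurd (h i hc) (by omega)
            have h2 : ℓ i = 0 := by have := hsp i; omega
            simp [h2, hi]
      have heq : ∑ i, (if ℓ i = -1 then -(a i : ℤ) else 0) = -(m : ℤ) := by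
        rw [← Finset.sum_filter, Finset.sum_neg_distrib, ← Nat.cast_sum, hm]
      rw [heq] at hle
      omega
    obtain ⟨j, hj, haj⟩ := hex
    have hjne : ℓ j ≠ -1 := by omega
    set F := Finset.univ.filter (fun k => ℓ k = -1) with hF
    set b : Fin r → ℕ := fun k => if ℓ k = -1 then a k else 0 with hb
    have hbsum : ∑ i, b i = m := by
      rw [← hm, Finset.sum_filter]
    set t : ℕ := min (ℓ j).toNat m with htdef
    have ht1 : 1 ≤ t := by
      have : 1 ≤ (ℓ j).toNat := by omega
      omega
    obtain ⟨v, hvle, hvsum⟩ := exists_le_sum b t (by omega)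
    have hvsupp : ∀ k, v k ≠ 0 → ℓ k = -1 := by
      intro k hk
      by_contra hc
      have hb0 : b k = 0 := by simp [hb, hc]
      have := hvle k; omega
    have hvj : v j = 0 := by
      have h1 := hvle j
      have h2 : b j = 0 := by simp [hb, hjne]
      omega
    have htle : (t : ℤ) ≤ ℓ j := by
      have h1 : t ≤ (ℓ j).toNat := min_le_left _ _
      omega
    have hgen : (Pi.single j 1 + v : Fin r → ℕ) ∈
        ({u | ∃ j, ℓ j = 0 ∧ u = Pi.single j 1} ∪
         {u | ∃ j, ∃ v : Fin r → ℕ, 0 < ℓ j ∧ (∀ k, v k ≠ 0 → ℓ k = -1) ∧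
            ((∑ i, v i : ℕ) : ℤ) ≤ ℓ j ∧ u = Pi.single j 1 + v}) :=
      Or.inr ⟨j, v, hj, hvsupp, by rw [hvsum]; exact htle, rfl⟩
    set a' : Fin r → ℕ := fun k => a k - (Pi.single j 1 + v : Fin r → ℕ) k with ha'
    have happ : ∀ k, (Pi.single j 1 + v : Fin r → ℕ) k
        = (Pi.single j 1 : Fin r → ℕ) k + v k := fun k => rfl
    have ha'app : ∀ k, a' k = a k - ((Pi.single j 1 : Fin r → ℕ) k + v k) := by
      intro k; rw [ha']; rfl
    have hle' : ∀ k, (Pi.single j 1 + v : Fin r → ℕ) k ≤ a k := by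
      intro k
      rcases eq_or_ne k j with rfl | hkj
      · simp only [Pi.add_apply, Pi.single_eq_same, hvj]
        omega
      · simp only [Pi.add_apply, Pi.single_apply, if_neg hkj, zero_add]
        have h1 := hvle k
        have h2 : b k ≤ a k := by simp only [hb]; split <;> omega
        omega
    have hsplit : a = (Pi.single j 1 + v) + a' := by
      funext k
      have h1 := hle' k
      rw [happ k] at h1
      simp only [Pi.add_apply]
      rw [ha'app k]
      omega
    -- sum of a' over F
    have hFv : ∑ k ∈ F, v k = t := by
      rw [← hvsum]
      apply Finset.sum_subset (Finset.subset_univ F)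
      intro k _ hk
      by_contra hc
      have := hvsupp k hc
      simp [hF, this] at hk
    have hFs : ∑ k ∈ F, (Pi.single j 1 : Fin r → ℕ) k = 0 := by
      apply Finset.sum_eq_zero
      intro k hk
      simp only [hF, Finset.mem_filter] at hk
      rw [Pi.single_apply, if_neg]
      intro hc; rw [hc] at hk; exact hjne hk.2
    have hFsum : ∑ k ∈ F, a' k + t = m := by
      have h1 : ∑ k ∈ F, a' k + ∑ k ∈ F, ((Pi.single j 1 + v : Fin r → ℕ) k) = ∑ k ∈ F, a k := by
        rw [← Finset.sum_add_distrib]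
        apply Finset.sum_congr rfl
        intro k _
        have h3 := hle' k
        rw [happ k] at h3
        rw [happ k, ha'app k]
        omega
      have h2 : ∑ k ∈ F, ((Pi.single j 1 + v : Fin r → ℕ) k) = t := by
        simp only [Pi.add_apply]
        rw [Finset.sum_add_distrib, hFs, hFv, zero_add]
      rw [h2] at h1
      omega
    -- decompose the integer sum
    have hvℓ : ∑ i, (v i : ℤ) * ℓ i = -(t : ℤ) := by
      have h1 : ∀ i ∈ Finset.univ, (v i : ℤ) * ℓ i = -(v i : ℤ) := by
        intro i _
        rcases Nat.eq_zero_or_pos (v i) with h0 | h0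
        · simp [h0]
        · rw [hvsupp i (by omega)]; ring
      rw [Finset.sum_congr rfl h1, Finset.sum_neg_distrib, ← Nat.cast_sum, hvsum]
    have hsℓ : ∑ i, ((Pi.single j 1 : Fin r → ℕ) i : ℤ) * ℓ i = ℓ j := by
      rw [Finset.sum_eq_single j]
      · simp
      · intro i _ hij
        simp [Pi.single_apply, hij]
      · simp
    have hdecomp : ∑ i, (a i : ℤ) * ℓ i
        = (∑ i, (a' i : ℤ) * ℓ i) + ℓ j + (-(t : ℤ)) := by
      have h1 : ∀ i ∈ Finset.univ, (a i : ℤ) * ℓ i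
          = (a' i : ℤ) * ℓ i + ((Pi.single j 1 : Fin r → ℕ) i : ℤ) * ℓ i
            + (v i : ℤ) * ℓ i := by
        intro i _
        have h2 := hle' i
        have h3 : (a i : ℤ) = (a' i : ℤ) + ((Pi.single j 1 : Fin r → ℕ) i : ℤ)
            + (v i : ℤ) := by
          rw [happ i] at h2
          rw [ha'app i]
          omega
        rw [h3]; ring
      rw [Finset.sum_congr rfl h1, Finset.sum_add_distrib, Finset.sum_add_distrib,
        hvℓ, hsℓ]
    have hsum' : 0 ≤ ∑ i, (a' i : ℤ) * ℓ i := by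
      rcases le_or_gt ((ℓ j).toNat) m with hc | hc
      · have ht : (t : ℤ) = ℓ j := by
          have : t = (ℓ j).toNat := by omega
          omega
        rw [hdecomp, ht] at hsum
        linarith
      · have htm : t = m := by omega
        have hF0 : ∀ k ∈ F, a' k = 0 := by
          have : ∑ k ∈ F, a' k = 0 := by omega
          exact fun k hk => Finset.sum_eq_zero_iff.mp this k hk
        apply Finset.sum_nonneg
        intro i _
        by_cases hi : ℓ i = -1
        · have : a' i = 0 := hF0 i (by simp [hF, hi])
          simp [this]
        · have : 0 ≤ ℓ i := by have := hsp i; omega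
          positivity
    rw [hsplit]
    exact AddSubmonoid.add_mem _ (AddSubmonoid.subset_closure hgen)
      (ih (m - t) (by omega) a' (by omega) hsum')

/-- If all poles are simple (`ℓ j ≥ -1` for all `j`), then `H(ℓ)` is generated by the
`e_j` with `ℓ j = 0` together with the `e_j + v` with `ℓ j > 0`, `supp v ⊆ {k | ℓ k = -1}`
and `|v| ≤ ℓ j`. -/
theorem stmt13 (r : ℕ) (ℓ : Fin r → ℤ) (hsp : ∀ j, -1 ≤ ℓ j) :
    Hmono r ℓ = AddSubmonoid.closure
      ({u | ∃ j, ℓ j = 0 ∧ u = Pi.single j 1} ∪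
       {u | ∃ j, ∃ v : Fin r → ℕ, 0 < ℓ j ∧ (∀ k, v k ≠ 0 → ℓ k = -1) ∧
          ((∑ i, v i : ℕ) : ℤ) ≤ ℓ j ∧ u = Pi.single j 1 + v}) := by
  have hmem : ∀ w : Fin r → ℕ, 0 ≤ ∑ i, (w i : ℤ) * ℓ i → w ∈ Hmono r ℓ :=
    fun w h => h
  have hmem' : ∀ w : Fin r → ℕ, w ∈ Hmono r ℓ → 0 ≤ ∑ i, (w i : ℤ) * ℓ i :=
    fun w h => h
  have hsingle : ∀ j : Fin r, ∑ i, ((Pi.single j 1 : Fin r → ℕ) i : ℤ) * ℓ i = ℓ j := by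
    intro j
    rw [Finset.sum_eq_single j]
    · simp
    · intro i _ hij
      simp [Pi.single_apply, hij]
    · simp
  apply le_antisymm
  · intro a ha
    exact key ℓ hsp _ a rfl (hmem' a ha)
  · rw [AddSubmonoid.closure_le]
    rintro u (⟨j, hj, rfl⟩ | ⟨j, v, hj, hv, hle, rfl⟩)
    · exact hmem _ (by rw [hsingle j, hj])
    · apply hmem
      have h1 : ∑ i, (((Pi.single j 1 + v : Fin r → ℕ)) i : ℤ) * ℓ i
          = ℓ j + ∑ i, (v i : ℤ) * ℓ i := by
        have h2 : ∀ i ∈ Finset.univ, (((Pi.single j 1 + v : Fin r → ℕ)) i : ℤ) * ℓ i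
            = ((Pi.single j 1 : Fin r → ℕ) i : ℤ) * ℓ i + (v i : ℤ) * ℓ i := by
          intro i _
          have : ((Pi.single j 1 + v : Fin r → ℕ)) i
              = (Pi.single j 1 : Fin r → ℕ) i + v i := rfl
          rw [this]
          push_cast
          ring
        rw [Finset.sum_congr rfl h2, Finset.sum_add_distrib, hsingle j]
      have h3 : ∑ i, (v i : ℤ) * ℓ i = -((∑ i, v i : ℕ) : ℤ) := by
        have h4 : ∀ i ∈ Finset.univ, (v i : ℤ) * ℓ i = -(v i : ℤ) := by
          intro i _
          rcases Nat.eq_zero_or_pos (v i) with h0 | h0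
          · simp [h0]
          · rw [hv i (by omega)]; ring
        rw [Finset.sum_congr rfl h4, Finset.sum_neg_distrib, ← Nat.cast_sum]
      rw [h1, h3]
      omega
end
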